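/- arXiv:1508.02273 — 8 statements merged into one kernel-verified Lean document; each statement's English description precedes it below -/
import Mathlib

section
/- The generating function T₂(a,u) for bi-coloured Dyck paths (each step coloured red or blue), counted by half-length (conjugate to u) and number of multicoloured peaks (an up-step followed by a down-step of the opposite colour, conjugate to a), satisfies the quadratic equation T₂ = 4u(T₂ - 1)T₂ + u(2a+2)T₂ + 1. -/
open scoped Classical

/-- A step of a bi-coloured Dyck path: the first component records whether it is an
up-step, the second component records the colour (red/blue). -/
abbrev BiStep := Bool × Bool

/-- The height increment of a step. -/
def stepHt (s : BiStep) : ℤ := if s.1 then 1 else -1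

/-- The final height of a path. -/
def pathHt (l : List BiStep) : ℤ := (l.map stepHt).sum

/-- A bi-coloured Dyck path: all prefix heights are nonnegative and the final height is 0. -/
def IsBiDyck (l : List BiStep) : Prop :=
  (∀ m : ℕ, 0 ≤ pathHt (l.take m)) ∧ pathHt l = 0

/-- The number of multicoloured peaks: an up-step immediately followed by a down-step of
the opposite colour. -/
def mcPeaks (l : List BiStep) : ℕ :=
  ((l.zip l.tail).filter fun p => decide (p.1.1 = true ∧ p.2.1 = false ∧ p.1.2 ≠ p.2.2)).length

/-- The generating function `T₂(a,u)` of bi-coloured Dyck paths, counted by half-length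
(conjugate to the power-series variable `u`) and by the number of multicoloured peaks
(conjugate to the polynomial variable `a`). -/
noncomputable def T₂ : PowerSeries (Polynomial ℤ) :=
  PowerSeries.mk fun n =>
    ∑ f : Fin (2 * n) → BiStep,
      if IsBiDyck (List.ofFn f) then (Polynomial.X : Polynomial ℤ) ^ mcPeaks (List.ofFn f) else 0

/-! Cutting a nonempty bi-coloured Dyck path at its first return to height `0` writes it
uniquely as `U P D Q` (`dyckNode`), with `U` an up-step and `D` a down-step, each of either
colour, and `P`, `Q` Dyck paths. Every multicoloured peak lies inside `P` or `Q`, except possibly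
`U D`, which is one exactly when `P` is empty and the colours of `U` and `D` differ. Hence the
nonempty paths with `P` empty contribute `u(2a+2)T₂`, and the others `4u(T₂-1)T₂`. -/

open Finset Polynomial

@[simp] lemma stepHt_up (c : Bool) : stepHt (true, c) = 1 := rfl

@[simp] lemma stepHt_down (c : Bool) : stepHt (false, c) = -1 := rfl

@[simp] lemma pathHt_nil : pathHt [] = 0 := rfl

@[simp] lemma pathHt_cons (x : BiStep) (l : List BiStep) :
    pathHt (x :: l) = stepHt x + pathHt l := by
  simp [pathHt]

@[simp] lemma pathHt_append (l₁ l₂ : List BiStep) :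
    pathHt (l₁ ++ l₂) = pathHt l₁ + pathHt l₂ := by
  simp [pathHt]

lemma even_pathHt_iff (l : List BiStep) : Even (pathHt l) ↔ Even l.length := by
  induction l with
  | nil => simp
  | cons x l ih => obtain ⟨_ | _, c⟩ := x <;> simp [parity_simps, ih]

lemma IsBiDyck.nil : IsBiDyck [] := ⟨fun _ => by simp, rfl⟩

lemma IsBiDyck.even_length {l : List BiStep} (h : IsBiDyck l) : Even l.length :=
  (even_pathHt_iff l).1 (h.2 ▸ .zero)

lemma IsBiDyck.head?_up {l : List BiStep} (h : IsBiDyck l) : ∀ x ∈ l.head?, x.1 = true := by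
  rintro ⟨_ | _, c⟩ hx
  · obtain ⟨t, rfl⟩ : ∃ t, l = (false, c) :: t := by
      cases l <;> simp_all
    simpa using h.1 1
  · rfl

lemma IsBiDyck.getLast?_down {l : List BiStep} (h : IsBiDyck l) :
    ∀ x ∈ l.getLast?, x.1 = false := by
  rintro ⟨_ | _, c⟩ hx
  · rfl
  · obtain ⟨L, rfl⟩ : ∃ L, l = L ++ [(true, c)] := by
      rcases List.eq_nil_or_concat' l with rfl | ⟨L, b, rfl⟩ <;> simp_all
    have hL := h.1 L.length
    have hend := h.2
    simp only [List.take_left', pathHt_append, pathHt_cons, stepHt_up, pathHt_nil] at hL hend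
    omega

def dyckNode (c₁ c₂ : Bool) (P Q : List BiStep) : List BiStep :=
  (true, c₁) :: (P ++ (false, c₂) :: Q)

lemma isBiDyck_dyckNode (c₁ c₂ : Bool) {P Q : List BiStep} (hP : IsBiDyck P)
    (hQ : IsBiDyck Q) : IsBiDyck (dyckNode c₁ c₂ P Q) := by
  refine ⟨fun m => ?_, by simp [dyckNode, hP.2, hQ.2]⟩
  rcases m with _ | m
  · simp
  simp only [dyckNode, List.take_succ_cons, pathHt_cons, stepHt_up, List.take_append,
    pathHt_append]
  obtain h | ⟨k, hk⟩ : m - P.length = 0 ∨ ∃ k, m - P.length = k + 1 :=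
    Nat.eq_zero_or_eq_succ_pred _ |>.imp id fun h => ⟨_, h⟩
  · simp only [h, List.take_zero, pathHt_nil]
    linarith [hP.1 m]
  · rw [hk, List.take_succ_cons, pathHt_cons, stepHt_down, List.take_of_length_le (by omega), hP.2]
    linarith [hQ.1 k]

lemma exists_eq_append_down_of_pathHt_eq_neg_one {r : List BiStep}
    (hpre : ∀ m, -1 ≤ pathHt (r.take m)) (hr : pathHt r = -1) :
    ∃ P c Q, r = P ++ (false, c) :: Q ∧ IsBiDyck P ∧ IsBiDyck Q := by
  have hex : ∃ k, pathHt (r.take k) = -1 := ⟨r.length, by rwa [List.take_length]⟩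
  obtain ⟨k, hk, hmin⟩ :
      ∃ k, pathHt (r.take (k + 1)) = -1 ∧ ∀ m ≤ k, pathHt (r.take m) ≠ -1 := by
    obtain ⟨k, hk⟩ : ∃ k, Nat.find hex = k + 1 := Nat.exists_eq_add_one.2 <|
      Nat.pos_of_ne_zero fun h0 => by simpa [h0] using Nat.find_spec hex
    exact ⟨k, hk ▸ Nat.find_spec hex, fun m hm => Nat.find_min hex (by omega)⟩
  have hkr : k < r.length := by
    by_contra! h
    exact hmin r.length h (by rwa [List.take_length])
  obtain ⟨P, d, Q, rfl, rfl⟩ : ∃ P d Q, r = P ++ d :: Q ∧ P.length = k :=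
    ⟨r.take k, r[k], r.drop (k + 1), by simp [List.getElem_cons_drop], by simp only [List.length_take]; omega⟩
  have hPpre : ∀ m, 0 ≤ pathHt (P.take m) := by
    intro m
    have h₁ := hpre (min m P.length)
    have h₂ := hmin (min m P.length) (min_le_right _ _)
    rw [List.take_append_of_le_length (min_le_right _ _), ← List.take_eq_take_min] at h₁ h₂
    omega
  have hP : pathHt P = 0 ∧ d.1 = false := by
    have h₀ := hPpre P.length
    rw [List.take_length] at h₀
    rw [List.take_append, List.take_of_length_le (by omega), Nat.add_sub_cancel_left] at hk
    simp only [List.take_succ_cons, List.take_zero, pathHt_append, pathHt_cons, pathHt_nil] at hk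
    obtain ⟨_ | _, c⟩ := d <;> simp only [stepHt_up, stepHt_down] at hk
    · exact ⟨by omega, rfl⟩
    · omega
  obtain ⟨c, rfl⟩ : ∃ c, d = (false, c) := ⟨d.2, by rw [← hP.2]⟩
  refine ⟨P, c, Q, rfl, ⟨hPpre, hP.1⟩, fun m => ?_, by simpa [hP.1] using hr⟩
  have := hpre (P.length + 1 + m)
  rw [List.take_append, List.take_of_length_le (by omega), add_assoc, Nat.add_sub_cancel_left,
    add_comm, List.take_succ_cons] at this
  simp only [pathHt_append, hP.1, pathHt_cons, stepHt_down] at this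
  linarith

lemma IsBiDyck.exists_eq_dyckNode {l : List BiStep} (h : IsBiDyck l) (hl : l ≠ []) :
    ∃ c₁ c₂ P Q, l = dyckNode c₁ c₂ P Q ∧ IsBiDyck P ∧ IsBiDyck Q := by
  obtain ⟨x, r, rfl⟩ := List.exists_cons_of_ne_nil hl
  obtain ⟨c₁, rfl⟩ : ∃ c₁, x = (true, c₁) := ⟨x.2, by rw [← h.head?_up x rfl]⟩
  have hpre : ∀ m, -1 ≤ pathHt (r.take m) := fun m => by
    have := h.1 (m + 1)
    simp only [List.take_succ_cons, pathHt_cons, stepHt_up] at this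
    linarith
  have hr : pathHt r = -1 := by
    have := h.2
    simp only [pathHt_cons, stepHt_up] at this
    linarith
  obtain ⟨P, c₂, Q, rfl, hP, hQ⟩ := exists_eq_append_down_of_pathHt_eq_neg_one hpre hr
  exact ⟨c₁, c₂, P, Q, rfl, hP, hQ⟩

lemma length_le_of_append_down_eq {P P' Q R : List BiStep} {c : Bool} (hP' : IsBiDyck P')
    (hP : pathHt P = 0) (h : P ++ (false, c) :: Q = P' ++ R) : P'.length ≤ P.length := by
  by_contra! hlt
  have := congrArg (fun l => pathHt (l.take (P.length + 1))) h
  simp only [List.take_append, List.take_of_length_le (Nat.le_succ P.length),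
    Nat.add_sub_cancel_left, Nat.sub_eq_zero_of_le hlt, List.take_zero, List.append_nil,
    List.take_succ_cons, pathHt_append, pathHt_cons, pathHt_nil, stepHt_down, hP] at this
  linarith [hP'.1 (P.length + 1)]

lemma dyckNode_inj {c₁ c₂ c₁' c₂' : Bool} {P Q P' Q' : List BiStep} (hP : IsBiDyck P)
    (hP' : IsBiDyck P') (h : dyckNode c₁ c₂ P Q = dyckNode c₁' c₂' P' Q') :
    c₁ = c₁' ∧ P = P' ∧ c₂ = c₂' ∧ Q = Q' := by
  simp only [dyckNode, List.cons.injEq, Prod.mk.injEq, true_and] at h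
  obtain ⟨rfl, h⟩ := h
  obtain ⟨rfl, h⟩ := List.append_inj h <| le_antisymm
    (length_le_of_append_down_eq hP hP'.2 h.symm) (length_le_of_append_down_eq hP' hP.2 h)
  simpa using h

@[simp] lemma mcPeaks_nil : mcPeaks [] = 0 := rfl

lemma mcPeaks_cons_cons (x y : BiStep) (l : List BiStep) :
    mcPeaks (x :: y :: l) =
      mcPeaks (y :: l) + if x.1 = true ∧ y.1 = false ∧ x.2 ≠ y.2 then 1 else 0 := by
  simp only [mcPeaks, List.tail_cons, List.zip_cons_cons, List.filter_cons]
  split_ifs <;> simp_all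

lemma mcPeaks_cons_of_down {x : BiStep} (hx : x.1 = false) (l : List BiStep) :
    mcPeaks (x :: l) = mcPeaks l := by
  cases l with
  | nil => rfl
  | cons y l => simp [mcPeaks_cons_cons, hx]

lemma mcPeaks_append_of_getLast?_down {l₁ : List BiStep} (h : ∀ x ∈ l₁.getLast?, x.1 = false)
    (l₂ : List BiStep) : mcPeaks (l₁ ++ l₂) = mcPeaks l₁ + mcPeaks l₂ := by
  induction l₁ with
  | nil => simp
  | cons a t ih =>
    cases t with
    | nil => simp [mcPeaks_cons_of_down (h a rfl)]
    | cons b t =>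
      rw [List.getLast?_cons_cons] at h
      rw [show a :: b :: t ++ l₂ = a :: b :: (t ++ l₂) from rfl, mcPeaks_cons_cons,
        ← List.cons_append, ih h, mcPeaks_cons_cons]
      ring

lemma mcPeaks_dyckNode (c₁ c₂ : Bool) {P : List BiStep} (hP : IsBiDyck P) (Q : List BiStep) :
    mcPeaks (dyckNode c₁ c₂ P Q) = mcPeaks P + mcPeaks Q + if P = [] ∧ c₁ ≠ c₂ then 1 else 0 := by
  cases P with
  | nil => simp [dyckNode, mcPeaks_cons_cons, mcPeaks_cons_of_down]
  | cons p P =>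
    rw [dyckNode, List.cons_append, mcPeaks_cons_cons, ← List.cons_append,
      mcPeaks_append_of_getLast?_down hP.getLast?_down, mcPeaks_cons_of_down (x := (false, c₂)) rfl]
    simp [hP.head?_up p rfl]

noncomputable def dyckPaths (n : ℕ) : Finset (List BiStep) :=
  ((univ : Finset (Fin n → BiStep)).image List.ofFn).filter IsBiDyck

lemma mem_dyckPaths {n : ℕ} {l : List BiStep} : l ∈ dyckPaths n ↔ l.length = n ∧ IsBiDyck l := by
  simp only [dyckPaths, mem_filter, mem_image, mem_univ, true_and]
  refine and_congr_left fun _ => ⟨?_, ?_⟩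
  · rintro ⟨f, rfl⟩
    exact List.length_ofFn
  · rintro rfl
    exact ⟨fun i => l[i], List.ofFn_getElem⟩

lemma dyckPaths_zero : dyckPaths 0 = {[]} := by
  ext l
  rw [mem_dyckPaths, mem_singleton, List.length_eq_zero_iff]
  exact ⟨And.left, fun h => ⟨h, h ▸ IsBiDyck.nil⟩⟩

noncomputable def dyckPoly (n : ℕ) : ℤ[X] :=
  ∑ l ∈ dyckPaths n, X ^ mcPeaks l

lemma dyckPoly_zero : dyckPoly 0 = 1 := by
  simp [dyckPoly, dyckPaths_zero]

lemma coeff_T₂ (n : ℕ) : PowerSeries.coeff n T₂ = dyckPoly (2 * n) := by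
  rw [T₂, PowerSeries.coeff_mk, dyckPoly, dyckPaths, sum_filter,
    sum_image fun f _ g _ h => List.ofFn_injective h]

lemma constantCoeff_T₂ : PowerSeries.constantCoeff T₂ = 1 := by
  rw [← PowerSeries.coeff_zero_eq_constantCoeff_apply, coeff_T₂, dyckPoly_zero]

lemma sum_dyckNode (i j : ℕ) :
    ∑ c₁ : Bool, ∑ c₂ : Bool, ∑ P ∈ dyckPaths (2 * i), ∑ Q ∈ dyckPaths (2 * j),
      (X : ℤ[X]) ^ mcPeaks (dyckNode c₁ c₂ P Q)
      = (if i = 0 then 2 * X + 2 else 4) * (dyckPoly (2 * i) * dyckPoly (2 * j)) := by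
  rcases eq_or_ne i 0 with rfl | hi
  · have hterm : ∀ c₁ c₂ Q, (X : ℤ[X]) ^ mcPeaks (dyckNode c₁ c₂ [] Q)
        = (if c₁ = c₂ then 1 else X) * X ^ mcPeaks Q := by
      intro c₁ c₂ Q
      rw [mcPeaks_dyckNode _ _ IsBiDyck.nil]
      split_ifs <;> simp_all [pow_succ, mul_comm]
    simp only [Nat.mul_zero, dyckPaths_zero, sum_singleton, hterm, ← mul_sum,
      dyckPoly_zero, Fintype.sum_bool]
    simp only [↓reduceIte, Bool.true_eq_false, Bool.false_eq_true, dyckPoly]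
    ring
  · have hsum : ∀ c₁ c₂, ∑ P ∈ dyckPaths (2 * i), ∑ Q ∈ dyckPaths (2 * j),
        (X : ℤ[X]) ^ mcPeaks (dyckNode c₁ c₂ P Q) = dyckPoly (2 * i) * dyckPoly (2 * j) := by
      intro c₁ c₂
      rw [dyckPoly, dyckPoly, sum_mul_sum]
      refine sum_congr rfl fun P hP => sum_congr rfl fun Q _ => ?_
      obtain ⟨hlen, hP⟩ := mem_dyckPaths.1 hP
      have hne : P ≠ [] := by rintro rfl; exact hi (by simpa using hlen.symm)
      simp [mcPeaks_dyckNode c₁ c₂ hP, hne, pow_add]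
    simp only [hsum, Fintype.sum_bool, if_neg hi]
    ring

lemma sum_dyckPaths_two_mul_succ {M : Type*} [AddCommMonoid M] (f : List BiStep → M) (n : ℕ) :
    ∑ l ∈ dyckPaths (2 * (n + 1)), f l = ∑ p ∈ antidiagonal n, ∑ c₁ : Bool, ∑ c₂ : Bool,
      ∑ P ∈ dyckPaths (2 * p.1), ∑ Q ∈ dyckPaths (2 * p.2), f (dyckNode c₁ c₂ P Q) := by
  let S : Finset (Σ _ : ℕ × ℕ, Bool × Bool × List BiStep × List BiStep) :=
    (antidiagonal n).sigma fun p => univ ×ˢ univ ×ˢ dyckPaths (2 * p.1) ×ˢ dyckPaths (2 * p.2)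
  have mem_S : ∀ i j c₁ c₂ P Q, ⟨(i, j), c₁, c₂, P, Q⟩ ∈ S ↔
      i + j = n ∧ P ∈ dyckPaths (2 * i) ∧ Q ∈ dyckPaths (2 * j) := by
    simp [S]
  let toPath (x : Σ _ : ℕ × ℕ, Bool × Bool × List BiStep × List BiStep) : List BiStep :=
    dyckNode x.2.1 x.2.2.1 x.2.2.2.1 x.2.2.2.2
  calc ∑ l ∈ dyckPaths (2 * (n + 1)), f l = ∑ x ∈ S, f (toPath x) := by
        refine (sum_nbij toPath ?_ ?_ ?_ fun _ _ => rfl).symm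
        · rintro ⟨⟨i, j⟩, c₁, c₂, P, Q⟩ hx
          obtain ⟨hij, hP, hQ⟩ := (mem_S ..).1 hx
          rw [mem_dyckPaths] at hP hQ ⊢
          refine ⟨?_, isBiDyck_dyckNode _ _ hP.2 hQ.2⟩
          simp only [toPath, dyckNode, List.length_cons, List.length_append, hP.1, hQ.1]
          omega
        · rintro ⟨⟨i, j⟩, c₁, c₂, P, Q⟩ hx ⟨⟨i', j'⟩, c₁', c₂', P', Q'⟩ hx' h
          obtain ⟨hij, hP, -⟩ := (mem_S ..).1 hx
          obtain ⟨hij', hP', -⟩ := (mem_S ..).1 hx'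
          rw [mem_dyckPaths] at hP hP'
          obtain ⟨rfl, rfl, rfl, rfl⟩ := dyckNode_inj hP.2 hP'.2 h
          obtain rfl : i = i' := by omega
          obtain rfl : j = j' := by omega
          rfl
        · intro l hl
          obtain ⟨hlen, hl⟩ := mem_dyckPaths.1 hl
          obtain ⟨c₁, c₂, P, Q, rfl, hP, hQ⟩ := hl.exists_eq_dyckNode (by rintro rfl; simp at hlen)
          obtain ⟨i, hi⟩ := hP.even_length
          obtain ⟨j, hj⟩ := hQ.even_length
          refine ⟨⟨(i, j), c₁, c₂, P, Q⟩, (mem_S ..).2 ?_, rfl⟩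
          simp only [dyckNode, List.length_cons, List.length_append] at hlen
          simp only [mem_dyckPaths, hP, hQ, and_true]
          omega
    _ = _ := by simp only [S, toPath, sum_sigma, sum_product]

lemma dyckPoly_two_mul_succ (n : ℕ) :
    dyckPoly (2 * (n + 1)) = ∑ p ∈ antidiagonal n,
      (if p.1 = 0 then 2 * X + 2 else 4) * (dyckPoly (2 * p.1) * dyckPoly (2 * p.2)) := by
  rw [dyckPoly, sum_dyckPaths_two_mul_succ]
  exact sum_congr rfl fun p _ => sum_dyckNode p.1 p.2

lemma coeff_succ_T₂ (n : ℕ) :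
    PowerSeries.coeff (n + 1) T₂ =
      4 * PowerSeries.coeff n ((T₂ - 1) * T₂) + (2 * X + 2) * PowerSeries.coeff n T₂ := by
  have hsplit : ∀ p ∈ antidiagonal n,
      (if p.1 = 0 then 2 * X + 2 else 4) * (dyckPoly (2 * p.1) * dyckPoly (2 * p.2)) =
        4 * (PowerSeries.coeff p.1 (T₂ - 1) * PowerSeries.coeff p.2 T₂) +
          if p = (0, n) then (2 * X + 2) * dyckPoly (2 * n) else 0 := by
    rintro ⟨i, j⟩ hij
    rw [HasAntidiagonal.mem_antidiagonal] at hij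
    rcases eq_or_ne i 0 with rfl | hi
    · obtain rfl : j = n := by omega
      simp [constantCoeff_T₂, dyckPoly_zero]
    · simp [hi, coeff_T₂, PowerSeries.coeff_one]
  rw [coeff_T₂, dyckPoly_two_mul_succ, sum_congr rfl hsplit, sum_add_distrib, ← mul_sum,
    ← PowerSeries.coeff_mul, sum_ite_eq', if_pos (by simp), coeff_T₂]

/-- The generating function `T₂(a,u)` for bi-coloured Dyck paths satisfies the quadratic
equation `T₂ = 4u(T₂ - 1)T₂ + u(2a+2)T₂ + 1`. -/
theorem stmt_0 :
    T₂ = 4 * PowerSeries.X * (T₂ - 1) * T₂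
        + PowerSeries.X * PowerSeries.C (R := Polynomial ℤ) (2 * Polynomial.X + 2) * T₂ + 1 := by
  refine PowerSeries.ext fun n => ?_
  rcases n with _ | n
  · simp [constantCoeff_T₂]
  · rw [coeff_succ_T₂, ← map_ofNat PowerSeries.C 4]
    generalize (2 : ℤ[X]) * X + 2 = c
    simp [mul_assoc, mul_left_comm _ PowerSeries.X, PowerSeries.coeff_C_mul, PowerSeries.coeff_one]
end

section
/- If T₂(a,u) satisfies T₂ = 4u(T₂-1)T₂ + u(2a+2)T₂ + 1, and T₁(a,u,y) satisfies T₁ = 2uy(T₂-1)T₁ + (uay + uy)T₁ + y, then T₁(a,u,y) = 4y / (4 + 2yu - 2yau - y + y√(1 - 12u + 4u² - 4au + 4a²u² - 8au²)), where √ is the formal power-series square root. -/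
/-!
Completing the square in the quadratic equation for `T₂` shows that `1 + 2u - 2au - 8uT₂`
squares to the radicand; it has constant term `1`, so it is the square root `S`. Substituting it
into the linear equation for `T₁` gives `T₁ · (4 + 2yu - 2yau - y + yS) = 4y`, and the factor
has constant term `4`, hence is invertible.
-/

open PowerSeries

theorem PowerSeries.eq_of_sq_eq_sq_of_constantCoeff_eq {R : Type*} [CommRing R]
    [NoZeroDivisors R] [NeZero (2 : R)] {f g : R⟦X⟧} (hsq : f ^ 2 = g ^ 2)
    (hfg : constantCoeff f = constantCoeff g) (hf : constantCoeff f ≠ 0) : f = g := by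
  refine (sq_eq_sq_iff_eq_or_eq_neg.mp hsq).resolve_right fun hneg => hf ?_
  have h := congrArg constantCoeff hneg
  rw [map_neg, ← hfg] at h
  have : (2 : R) * constantCoeff f = 0 := by linear_combination h
  exact (mul_eq_zero.mp this).resolve_left two_ne_zero

theorem sqrt_radicand_eq_of_quadratic {R : Type*} [CommRing R] [IsDomain R]
    [NeZero (2 : R)] (a : R) {S T : R⟦X⟧} (hS0 : constantCoeff S = 1)
    (hS : S ^ 2 = 1 - 12 * X + 4 * X ^ 2 - 4 * C a * X + 4 * C a ^ 2 * X ^ 2 - 8 * C a * X ^ 2)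
    (hT : T = 4 * X * (T - 1) * T + X * (2 * C a + 2) * T + 1) :
    S = 1 + 2 * X - 2 * C a * X - 8 * X * T := by
  refine eq_of_sq_eq_sq_of_constantCoeff_eq ?_ (by simp [hS0]) (by simp [hS0])
  rw [hS]
  linear_combination (16 * X : R⟦X⟧) * hT

theorem stmt_2_general (a y : ℝ) (S T₂ T₁ : PowerSeries ℝ)
    (hS0 : constantCoeff S = 1)
    (hS : S ^ 2 = 1 - 12 * X + 4 * X ^ 2 - 4 * C a * X + 4 * C a ^ 2 * X ^ 2
        - 8 * C a * X ^ 2)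
    (hT₂ : T₂ = 4 * X * (T₂ - 1) * T₂ + X * (2 * C a + 2) * T₂ + 1)
    (hT₁ : T₁ = 2 * X * C y * (T₂ - 1) * T₁ + (X * C a * C y + X * C y) * T₁ + C y) :
    T₁ = C (4 * y) *
        (4 + 2 * C y * X - 2 * C y * C a * X - C y + C y * S)⁻¹ := by
  rw [eq_mul_inv_iff_mul_eq (by simp [hS0, map_ofNat]),
    sqrt_radicand_eq_of_quadratic a hS0 hS hT₂, map_mul, map_ofNat]
  linear_combination (4 : PowerSeries ℝ) * hT₁

/-- If `T₂(a,u)` satisfies `T₂ = 4u(T₂-1)T₂ + u(2a+2)T₂ + 1` (with constant term 1) and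
`T₁(a,u,y)` satisfies `T₁ = 2uy(T₂-1)T₁ + (uay + uy)T₁ + y`, then
`T₁ = 4y / (4 + 2yu - 2yau - y + y√(1 - 12u + 4u² - 4au + 4a²u² - 8au²))`,
where `S` is the formal power-series square root (with constant term 1) of the radicand. -/
theorem stmt_2 (a y : ℝ) (S T₂ T₁ : PowerSeries ℝ)
    (hS0 : constantCoeff S = 1)
    (hS : S ^ 2 = 1 - 12 * X + 4 * X ^ 2 - 4 * C a * X + 4 * C a ^ 2 * X ^ 2
        - 8 * C a * X ^ 2)
    (hT₂0 : constantCoeff T₂ = 1)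
    (hT₂ : T₂ = 4 * X * (T₂ - 1) * T₂ + X * (2 * C a + 2) * T₂ + 1)
    (hT₁ : T₁ = 2 * X * C y * (T₂ - 1) * T₁ + (X * C a * C y + X * C y) * T₁ + C y) :
    T₁ = C (4 * y) *
        (4 + 2 * C y * X - 2 * C y * C a * X - C y + C y * S)⁻¹ :=
  stmt_2_general a y S T₂ T₁ hS0 hS hT₂ hT₁
end

section
/- If T₁(a,u,x) = 4x/(4 + 2xu - 2xau - x + xΔ) with Δ = √(1 - 12u + 4u² - 4au + 4a²u² - 8au²), and T(a,u,x) satisfies T = u·T₁(a,u,x)·T + 1, then T(a,u,x) = (4 + 2xu - 2xau - x + xΔ)/(4 - 2xu - 2xau - x + xΔ). -/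
open PowerSeries

/-- Clearing the denominator gives `T·(D - X·c) = D`, and `D - X·c` is invertible because it
has the same constant coefficient as `D`. -/
theorem PowerSeries.eq_mul_inv_of_eq_X_mul_mul_inv_mul_add_one {k : Type*} [Field k]
    {c D T : k⟦X⟧} (hD : constantCoeff D ≠ 0) (hT : T = X * (c * D⁻¹) * T + 1) :
    T = D * (D - X * c)⁻¹ := by
  have hDX : constantCoeff (D - X * c) ≠ 0 := by simpa using hD
  rw [eq_mul_inv_iff_mul_eq hDX]
  calc T * (D - X * c) = T * D - X * c * T := by ring
    _ = (X * (c * D⁻¹) * T + 1) * D - X * c * T := by rw [← hT]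
    _ = X * c * T * (D * D⁻¹) + D - X * c * T := by ring
    _ = D := by rw [PowerSeries.mul_inv_cancel D hD]; ring

theorem stmt_3_general (a x : ℝ) (Δ T₁ T : PowerSeries ℝ)
    (hΔ0 : constantCoeff Δ = 1)
    (hT₁ : T₁ = C (4 * x) *
        (4 + 2 * C x * X - 2 * C x * C a * X - C x + C x * Δ)⁻¹)
    (hT : T = X * T₁ * T + 1) :
    T = (4 + 2 * C x * X - 2 * C x * C a * X - C x + C x * Δ) *
        (4 - 2 * C x * X - 2 * C x * C a * X - C x + C x * Δ)⁻¹ := by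
  have hD : constantCoeff (4 + 2 * C x * X - 2 * C x * C a * X - C x + C x * Δ) ≠ 0 := by
    simp [hΔ0, map_ofNat]
  subst hT₁
  rw [eq_mul_inv_of_eq_X_mul_mul_inv_mul_add_one hD hT]
  congr 2
  simp only [map_mul, map_ofNat]
  ring

/-- If `T₁(a,u,x) = 4x/(4 + 2xu - 2xau - x + xΔ)` with
`Δ = √(1 - 12u + 4u² - 4au + 4a²u² - 8au²)` (the formal square root with constant term 1),
and `T(a,u,x)` satisfies `T = u·T₁·T + 1`, then
`T = (4 + 2xu - 2xau - x + xΔ)/(4 - 2xu - 2xau - x + xΔ)`. -/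
theorem stmt_3 (a x : ℝ) (Δ T₁ T : PowerSeries ℝ)
    (hΔ0 : constantCoeff Δ = 1)
    (hΔ : Δ ^ 2 = 1 - 12 * X + 4 * X ^ 2 - 4 * C a * X + 4 * C a ^ 2 * X ^ 2
        - 8 * C a * X ^ 2)
    (hT₁ : T₁ = C (4 * x) *
        (4 + 2 * C x * X - 2 * C x * C a * X - C x + C x * Δ)⁻¹)
    (hT : T = X * T₁ * T + 1) :
    T = (4 + 2 * C x * X - 2 * C x * C a * X - C x + C x * Δ) *
        (4 - 2 * C x * X - 2 * C x * C a * X - C x + C x * Δ)⁻¹ :=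
  stmt_3_general a x Δ T₁ T hΔ0 hT₁ hT
end

section
/- Every operation sequence over the alphabet {I₁, I₂, O₁, O₂} that is lexicographically minimal among all operation sequences producing a given deque-achievable permutation is canonical: it outputs eagerly (contains no consecutive I₁O₂ or I₂O₁), is standard (every tsip sub-word begins with I₁), and is top happy (I₂ or O₂ occurs only when the number of preceding I's exceeds the number of preceding O's by at least two). In particular, every deque-achievable permutation is produced by some canonical operation sequence. -/
/-- The four deque operations: input to the top/bottom, output from the top/bottom. -/
inductive Letter : Type
  | I1 | I2 | O1 | O2
  deriving DecidableEq, Repr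

open Letter

/-- Whether a letter is an input operation. -/
def Letter.isI : Letter → Bool
  | I1 => true | I2 => true | O1 => false | O2 => false

/-- Number of input letters in a word. -/
def countI (w : List Letter) : ℕ := (w.filter Letter.isI).length

/-- Number of output letters in a word. -/
def countO (w : List Letter) : ℕ := (w.filter fun x => !x.isI).length

/-- An operation sequence: equally many inputs and outputs, and every prefix has at
least as many inputs as outputs. -/
def IsOpSeq (w : List Letter) : Prop :=
  countI w = countO w ∧ ∀ m : ℕ, countO (w.take m) ≤ countI (w.take m)

/-- A tsip word: for each end `j ∈ {1,2}` of the deque, the number of `Iⱼ` equals the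
number of `Oⱼ`, and every prefix contains at least as many `Iⱼ` as `Oⱼ`. -/
def IsTsip (w : List Letter) : Prop :=
  (w.count I1 = w.count O1) ∧ (w.count I2 = w.count O2) ∧
    ∀ m : ℕ, (w.take m).count O1 ≤ (w.take m).count I1 ∧
      (w.take m).count O2 ≤ (w.take m).count I2

/-- A word outputs eagerly if it contains no consecutive sub-word `I₁O₂` or `I₂O₁`. -/
def OutputsEagerly (w : List Letter) : Prop :=
  ¬ [I1, O2] <:+: w ∧ ¬ [I2, O1] <:+: w

/-- A word is standard if every non-empty tsip sub-word begins with `I₁`. -/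
def Standard (w : List Letter) : Prop :=
  ∀ u : List Letter, u <:+: w → IsTsip u → u ≠ [] → u.head? = some I1

/-- A word is top happy if `I₂` and `O₂` occur only when the number of preceding inputs
exceeds the number of preceding outputs by at least two (i.e. the deque holds at least
two items). -/
def TopHappy (w : List Letter) : Prop :=
  ∀ u v : List Letter, ∀ x : Letter, w = u ++ x :: v → (x = I2 ∨ x = O2) →
    countO u + 2 ≤ countI u

/-- A canonical operation sequence: outputs eagerly, standard and top happy. -/
def Canonical (w : List Letter) : Prop :=
  OutputsEagerly w ∧ Standard w ∧ TopHappy w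

/-- The state of a deque machine: the remaining input, the deque contents (top first),
and the output produced so far. -/
structure DequeState : Type where
  inp : List ℕ
  dq : List ℕ
  out : List ℕ
  deriving DecidableEq, Repr

/-- Apply a single operation to a deque state, if possible. -/
def applyOp : Letter → DequeState → Option DequeState
  | I1, ⟨a :: r, d, o⟩ => some ⟨r, a :: d, o⟩
  | I2, ⟨a :: r, d, o⟩ => some ⟨r, d ++ [a], o⟩
  | O1, ⟨r, a :: d, o⟩ => some ⟨r, d, o ++ [a]⟩
  | O2, ⟨r, d, o⟩ =>
      match d.getLast? with
      | some a => some ⟨r, d.dropLast, o ++ [a]⟩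
      | none => none
  | I1, ⟨[], _, _⟩ => none
  | I2, ⟨[], _, _⟩ => none
  | O1, ⟨_, [], _⟩ => none

/-- Run a word of operations on a deque state. -/
def runOps : List Letter → DequeState → Option DequeState
  | [], s => some s
  | x :: w, s => (applyOp x s).bind (runOps w)

/-- `w` produces the permutation (given as the list `l`): applying `w` to the identity
input `0, 1, …, l.length - 1` empties the input and the deque with output exactly `l`. -/
def Produces (w : List Letter) (l : List ℕ) : Prop :=
  runOps w ⟨List.range l.length, [], []⟩ = some ⟨[], [], l⟩

/-- A list is deque-achievable if it is a permutation of `0, …, n-1` produced by some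
operation sequence. -/
def DequeAchievable (l : List ℕ) : Prop := ∃ w : List Letter, Produces w l

/-- The order `O₁ < O₂ < I₁ < I₂` on letters, via numerical values. -/
def letterVal : Letter → ℕ
  | Letter.O1 => 0 | Letter.O2 => 1 | Letter.I1 => 2 | Letter.I2 => 3


/-!
An exchange argument. If a lexicographically least word producing `l` violated one of the three
conditions, a modified word would produce `l` too and be smaller:
`I₁O₂` can be replaced by `I₁O₁` (empty deque) or `O₂I₁`, and `I₂O₁` by `I₁O₁` or `O₁I₂`;
a tsip factor only moves items it has pushed itself, so its mirror image (indices `1 ↔ 2`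
swapped) acts in the same way and starts with `I₁`; while the deque holds at most one item its two
ends coincide, so an `O₂` can become `O₁`, and an `I₂` can become `I₁` if the rest of the word is
mirrored. A least producer exists because all producers of `l` have length `2 * l.length`.
-/

namespace Letter

def mirror : Letter → Letter
  | I1 => I2 | I2 => I1 | O1 => O2 | O2 => O1

instance : Fintype Letter := ⟨{I1, I2, O1, O2}, fun x => by cases x <;> decide⟩

lemma letterVal_injective : Function.Injective letterVal := by decide

end Letter

namespace DequeState

def reverse (s : DequeState) : DequeState := ⟨s.inp, s.dq.reverse, s.out⟩

lemma reverse_eq_self {s : DequeState} (h : s.dq.length ≤ 1) : s.reverse = s := by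
  obtain ⟨i, _ | ⟨a, _ | ⟨b, d⟩⟩, o⟩ := s <;> simp_all [reverse]

end DequeState

section Run

@[simp] lemma runOps_nil (s : DequeState) : runOps [] s = some s := rfl

@[simp] lemma runOps_cons (x : Letter) (w : List Letter) (s : DequeState) :
    runOps (x :: w) s = (applyOp x s).bind (runOps w) := rfl

@[simp] lemma applyOp_I1 (a : ℕ) (i d o : List ℕ) :
    applyOp I1 ⟨a :: i, d, o⟩ = some ⟨i, a :: d, o⟩ := rfl

@[simp] lemma applyOp_I2 (a : ℕ) (i d o : List ℕ) :
    applyOp I2 ⟨a :: i, d, o⟩ = some ⟨i, d ++ [a], o⟩ := rfl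

@[simp] lemma applyOp_O1 (a : ℕ) (i d o : List ℕ) :
    applyOp O1 ⟨i, a :: d, o⟩ = some ⟨i, d, o ++ [a]⟩ := rfl

@[simp] lemma applyOp_O2 (a : ℕ) (i d o : List ℕ) :
    applyOp O2 ⟨i, d ++ [a], o⟩ = some ⟨i, d, o ++ [a]⟩ := by
  simp [applyOp]

lemma runOps_append (u v : List Letter) (s : DequeState) :
    runOps (u ++ v) s = (runOps u s).bind (runOps v) := by
  induction u generalizing s with
  | nil => rfl
  | cons x u ih => simp only [List.cons_append, runOps_cons, ih, Option.bind_assoc]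

lemma runOps_append_eq_some {u v : List Letter} {s r : DequeState} :
    runOps (u ++ v) s = some r ↔ ∃ t, runOps u s = some t ∧ runOps v t = some r := by
  simp [runOps_append, Option.bind_eq_some_iff]

lemma countI_cons (x : Letter) (w : List Letter) : countI (x :: w) = countI [x] + countI w := by
  cases x <;> simp [countI, List.filter_cons, Letter.isI, Nat.add_comm]

lemma countO_cons (x : Letter) (w : List Letter) : countO (x :: w) = countO [x] + countO w := by
  cases x <;> simp [countO, Letter.isI, Nat.add_comm]

lemma applyOp_length {x : Letter} {s s' : DequeState} (h : applyOp x s = some s') :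
    s'.inp.length + countI [x] = s.inp.length ∧ s'.out.length = s.out.length + countO [x] ∧
      s'.dq.length + countO [x] = s.dq.length + countI [x] := by
  obtain ⟨i, d, o⟩ := s
  cases x
  · obtain _ | ⟨a, i⟩ := i <;> simp [applyOp] at h
    subst h; simp [countI, countO, List.filter, Letter.isI]
  · obtain _ | ⟨a, i⟩ := i <;> simp [applyOp] at h
    subst h; simp [countI, countO, List.filter, Letter.isI]
  · obtain _ | ⟨a, d⟩ := d <;> simp [applyOp] at h
    subst h; simp [countI, countO, List.filter, Letter.isI]
  · rcases List.eq_nil_or_concat d with rfl | ⟨d, a, rfl⟩ <;> simp [applyOp] at h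
    subst h; simp [countI, countO, List.filter, Letter.isI]

lemma runOps_length {u : List Letter} {s s' : DequeState} (h : runOps u s = some s') :
    s'.inp.length + countI u = s.inp.length ∧ s'.out.length = s.out.length + countO u ∧
      s'.dq.length + countO u = s.dq.length + countI u := by
  induction u generalizing s with
  | nil => simp_all [countI, countO]
  | cons x u ih =>
    obtain ⟨t, hx, hu⟩ := Option.bind_eq_some_iff.mp h
    have := applyOp_length hx
    have := ih hu
    rw [countI_cons, countO_cons]
    omega

lemma Produces.length_eq {w : List Letter} {l : List ℕ} (h : Produces w l) :
    w.length = 2 * l.length := by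
  have := runOps_length h
  have : w.length = countI w + countO w := List.length_eq_length_filter_add Letter.isI
  simp only [List.length_range, List.length_nil] at *
  omega

end Run

section Mirror

lemma applyOp_mirror_reverse (x : Letter) (s : DequeState) :
    applyOp x.mirror s.reverse = (applyOp x s).map DequeState.reverse := by
  obtain ⟨i, d, o⟩ := s
  cases x
  · obtain _ | ⟨a, i⟩ := i <;> simp [Letter.mirror, DequeState.reverse, applyOp]
  · obtain _ | ⟨a, i⟩ := i <;> simp [Letter.mirror, DequeState.reverse, applyOp]
  · obtain _ | ⟨a, d⟩ := d <;> simp [Letter.mirror, DequeState.reverse, applyOp]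
  · rcases List.eq_nil_or_concat d with rfl | ⟨d, a, rfl⟩ <;>
      simp [Letter.mirror, DequeState.reverse, applyOp]

lemma runOps_mirror_reverse (u : List Letter) (s : DequeState) :
    runOps (u.map Letter.mirror) s.reverse = (runOps u s).map DequeState.reverse := by
  induction u generalizing s with
  | nil => rfl
  | cons x u ih =>
    simp only [List.map_cons, runOps_cons, applyOp_mirror_reverse]
    cases applyOp x s <;> simp [ih]

end Mirror

section Tsip

/-- `IsTsipWith t b u`: `u` behaves like a tsip word on a deque that already holds `t` items
of its own at the top and `b` at the bottom, which it has consumed at the end. -/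
def IsTsipWith (t b : ℕ) (u : List Letter) : Prop :=
  u.count O1 = t + u.count I1 ∧ u.count O2 = b + u.count I2 ∧
    ∀ m : ℕ, (u.take m).count O1 ≤ t + (u.take m).count I1 ∧
      (u.take m).count O2 ≤ b + (u.take m).count I2

lemma isTsipWith_zero_zero {u : List Letter} : IsTsipWith 0 0 u ↔ IsTsip u := by
  simp [IsTsipWith, IsTsip, eq_comm]

lemma IsTsipWith.tail {t b : ℕ} {x : Letter} {u : List Letter} (h : IsTsipWith t b (x :: u)) :
    [x].count O1 ≤ t ∧ [x].count O2 ≤ b ∧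
      IsTsipWith (t + [x].count I1 - [x].count O1) (b + [x].count I2 - [x].count O2) u := by
  obtain ⟨h1, h2, hm⟩ := h
  have h0 := hm 1
  refine ⟨?_, ?_, ?_, ?_, fun m => ?_⟩
  rotate_left 4
  · have hsucc := hm (m + 1)
    cases x <;> simp at h0 hsucc ⊢ <;> omega
  all_goals cases x <;> simp at h1 h2 h0 ⊢ <;> omega

lemma runOps_mirror_of_isTsipWith {u : List Letter} {i o T B d : List ℕ} {r : DequeState}
    (hu : IsTsipWith T.length B.length u) (h : runOps u ⟨i, T ++ d ++ B, o⟩ = some r) :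
    r.dq = d ∧ runOps (u.map Letter.mirror) ⟨i, B.reverse ++ d ++ T.reverse, o⟩ = some r := by
  induction u generalizing i o T B with
  | nil =>
    obtain ⟨hT, hB, -⟩ := hu
    obtain rfl : T = [] := List.eq_nil_of_length_eq_zero (by simpa using hT.symm)
    obtain rfl : B = [] := List.eq_nil_of_length_eq_zero (by simpa using hB.symm)
    cases h
    simp
  | cons x u ih =>
    obtain ⟨hT, hB, hu⟩ := hu.tail
    cases x
    · obtain _ | ⟨a, i⟩ := i
      · simp [applyOp] at h
      · simpa [Letter.mirror] using ih (T := a :: T) (by simpa using hu) (by simpa using h)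
    · obtain _ | ⟨a, i⟩ := i
      · simp [applyOp] at h
      · simpa [Letter.mirror] using ih (B := B ++ [a]) (by simpa using hu) (by simpa using h)
    · obtain _ | ⟨a, T⟩ := T
      · simp at hT
      · have := ih (T := T) (by simpa using hu) (by simpa using h)
        rw [List.reverse_cons, ← List.append_assoc]
        simpa only [List.map_cons, Letter.mirror, runOps_cons, applyOp_O2, Option.bind_some]
    · rcases List.eq_nil_or_concat B with rfl | ⟨B, a, rfl⟩
      · simp at hB
      · rw [List.concat_eq_append, ← List.append_assoc] at h
        simp only [runOps_cons, applyOp_O2, Option.bind_some] at h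
        simpa [Letter.mirror] using ih (B := B) (by simpa using hu) h

lemma runOps_mirror_of_isTsip {u : List Letter} {s r : DequeState} (hu : IsTsip u)
    (h : runOps u s = some r) : runOps (u.map Letter.mirror) s = some r := by
  simpa using (runOps_mirror_of_isTsipWith (T := []) (B := []) (d := s.dq)
    (isTsipWith_zero_zero.mpr hu) (by simpa using h)).2

end Tsip

lemma List.Lex.append_of_length_eq {α : Type*} {r : α → α → Prop} {x y : List α} (s t : List α)
    (hlen : x.length = y.length) (h : List.Lex r x y) : List.Lex r (x ++ s) (y ++ t) := by
  induction h with
  | nil => simp at hlen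
  | cons _ ih => exact .cons (ih (by simpa using hlen))
  | rel hab => exact .rel hab

section Exchange

lemma runOps_I1_O2 {s s' : DequeState} (h : runOps [I1, O2] s = some s') :
    runOps [I1, O1] s = some s' ∨ runOps [O2, I1] s = some s' := by
  obtain ⟨_ | ⟨a, i⟩, d, o⟩ := s
  · simp [applyOp] at h
  · rcases List.eq_nil_or_concat d with rfl | ⟨d, c, rfl⟩
    · left; simpa [applyOp] using h
    · simp only [List.concat_eq_append, runOps_cons, applyOp_I1, Option.bind_some] at h
      rw [← List.cons_append, applyOp_O2] at h
      right; simpa using h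

lemma runOps_I2_O1 {s s' : DequeState} (h : runOps [I2, O1] s = some s') :
    runOps [I1, O1] s = some s' ∨ runOps [O1, I2] s = some s' := by
  obtain ⟨_ | ⟨a, i⟩, _ | ⟨b, d⟩, o⟩ := s
  · simp [applyOp] at h
  · simp [applyOp] at h
  · left; simpa using h
  · right; simpa using h

lemma applyOp_O1_eq_O2 {s : DequeState} (h : s.dq.length ≤ 1) : applyOp O1 s = applyOp O2 s := by
  obtain ⟨i, _ | ⟨a, _ | ⟨b, d⟩⟩, o⟩ := s <;> simp_all [applyOp]

end Exchange

section LexMin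

def IsLexMinProducer (l : List ℕ) (w : List Letter) : Prop :=
  Produces w l ∧ ∀ v : List Letter, Produces v l →
    ¬ List.Lex (fun x y => letterVal x < letterVal y) v w

variable {l : List ℕ} {w : List Letter}

lemma IsLexMinProducer.not_lex_of_runOps {p x y : List Letter} {s : DequeState}
    (hw : IsLexMinProducer l (p ++ x)) (hp : runOps p ⟨List.range l.length, [], []⟩ = some s)
    (hy : runOps y s = some ⟨[], [], l⟩) : ¬ List.Lex (fun x y => letterVal x < letterVal y) y x :=
  fun hlt => hw.2 (p ++ y) (runOps_append_eq_some.mpr ⟨s, hp, hy⟩) (hlt.append_left _ p)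

lemma IsLexMinProducer.not_infix {x : List Letter} (hw : IsLexMinProducer l w)
    (hx : ∀ s s', runOps x s = some s' → ∃ y, y.length = x.length ∧
      List.Lex (fun x y => letterVal x < letterVal y) y x ∧ runOps y s = some s') :
    ¬ x <:+: w := by
  rintro ⟨p, q, rfl⟩
  obtain ⟨s, hp, hxq⟩ := runOps_append_eq_some.mp (List.append_assoc p x q ▸ hw.1)
  obtain ⟨s', hsx, hq⟩ := runOps_append_eq_some.mp hxq
  obtain ⟨y, hlen, hlt, hy⟩ := hx s s' hsx
  exact (List.append_assoc p x q ▸ hw).not_lex_of_runOps hp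
    (runOps_append_eq_some.mpr ⟨s', hy, hq⟩) (hlt.append_of_length_eq q q hlen)

lemma IsLexMinProducer.outputsEagerly (hw : IsLexMinProducer l w) : OutputsEagerly w := by
  constructor
  · refine hw.not_infix (x := [I1, O2]) fun s s' h => ?_
    rcases runOps_I1_O2 h with h' | h'
    · exact ⟨[I1, O1], rfl, .cons (.rel (by decide)), h'⟩
    · exact ⟨[O2, I1], rfl, .rel (by decide), h'⟩
  · refine hw.not_infix (x := [I2, O1]) fun s s' h => ?_
    rcases runOps_I2_O1 h with h' | h'
    · exact ⟨[I1, O1], rfl, .rel (by decide), h'⟩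
    · exact ⟨[O1, I2], rfl, .rel (by decide), h'⟩

lemma IsLexMinProducer.standard (hw : IsLexMinProducer l w) : Standard w := by
  rintro _ hinf hu hne
  obtain ⟨x, u, rfl⟩ := List.exists_cons_of_ne_nil hne
  have hhead := hu.2.2 1
  cases x
  · rfl
  · exact absurd hinf <| hw.not_infix fun _ _ h =>
      ⟨_, List.length_map _, .rel (by decide), runOps_mirror_of_isTsip hu h⟩
  all_goals simp at hhead

lemma IsLexMinProducer.topHappy (hw : IsLexMinProducer l w) : TopHappy w := by
  rintro u v x rfl hx
  by_contra! hlt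
  obtain ⟨s, hu, hxv⟩ := runOps_append_eq_some.mp hw.1
  have hdq : s.dq.length ≤ 1 := by
    have := (runOps_length hu).2.2
    simp only [List.length_nil] at this
    omega
  rcases hx with rfl | rfl
  · refine hw.not_lex_of_runOps hu (y := (I2 :: v).map Letter.mirror) ?_ (.rel (by decide))
    rw [← DequeState.reverse_eq_self hdq, runOps_mirror_reverse, hxv]
    rfl
  · refine hw.not_lex_of_runOps hu (y := O1 :: v) ?_ (.rel (by decide))
    rwa [runOps_cons, applyOp_O1_eq_O2 hdq]

lemma IsLexMinProducer.canonical (hw : IsLexMinProducer l w) : Canonical w :=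
  ⟨hw.outputsEagerly, hw.standard, hw.topHappy⟩

lemma exists_isLexMinProducer (hl : DequeAchievable l) : ∃ w, IsLexMinProducer l w := by
  -- with this order, `<` on `List Letter` is the lexicographic order of `IsLexMinProducer`
  let _ : LinearOrder Letter := LinearOrder.lift' letterVal Letter.letterVal_injective
  obtain ⟨w₀, hw₀⟩ := hl
  have hfin : {v | Produces v l}.Finite :=
    (List.finite_length_eq Letter (2 * l.length)).subset fun v hv => Produces.length_eq hv
  obtain ⟨w, hw, hmin⟩ := Set.exists_min_image _ id hfin ⟨w₀, hw₀⟩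
  exact ⟨w, hw, fun v hv hlt => (hmin v hv).not_gt hlt⟩

end LexMin

/-- Every operation sequence that is lexicographically minimal (for the order
`O₁ < O₂ < I₁ < I₂`) among all operation sequences producing a given deque-achievable
permutation is canonical; in particular every deque-achievable permutation is produced
by some canonical operation sequence. -/
theorem stmt_5 :
    (∀ (l : List ℕ) (w : List Letter), Produces w l →
        (∀ v : List Letter, Produces v l →
          ¬ List.Lex (fun x y => letterVal x < letterVal y) v w) →
        Canonical w) ∧
      ∀ l : List ℕ, DequeAchievable l → ∃ w : List Letter, Canonical w ∧ Produces w l :=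
  ⟨fun _ _ hw hmin => IsLexMinProducer.canonical ⟨hw, hmin⟩, fun _ hl =>
    let ⟨w, hw⟩ := exists_isLexMinProducer hl
    ⟨w, hw.canonical, hw.1⟩⟩
end

section
/- If two operation sequences u and v of the same length both produce the same permutation π on a deque and both output eagerly, then u and v have the same type (i.e., deleting subscripts yields the same word over {I,O}), and for each i, the i-th operation of u moves the same item as the i-th operation of v. -/
open Letter

/-- The item moved by an operation, given the state just before it is applied. -/
def movedElt : Letter → DequeState → Option ℕ
  | Letter.I1, s => s.inp.head?
  | Letter.I2, s => s.inp.head?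
  | Letter.O1, s => s.dq.head?
  | Letter.O2, s => s.dq.getLast?

/-- The item moved by the `i`-th operation of `w`, started on the identity input of
length `n`. -/
def movedAt (w : List Letter) (n i : ℕ) : Option ℕ :=
  (runOps (w.take i) ⟨List.range n, [], []⟩).bind fun s =>
    (w[i]?).bind fun x => movedElt x s

/-!
Run two eagerly outputting sequences producing the same permutation side by side. Their
states always agree up to the order of the deque contents: same remaining input, same output.
The next operation is then forced. If the next item of the permutation already sits in the
deque, an eager sequence must output it at once: after an input `I₁ b` the item `b` covers the
top and `I₁O₂` is forbidden, symmetrically for `I₂`. Otherwise it must input the next input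
item. So both sequences perform an operation of the same type moving the same item, and the
invariant persists.
-/

namespace DequeState

def items (s : DequeState) : List ℕ := s.inp ++ s.dq ++ s.out

structure EqUpToDequeOrder (s t : DequeState) : Prop where
  inp_eq : s.inp = t.inp
  dq_perm : s.dq.Perm t.dq
  out_eq : s.out = t.out

lemma EqUpToDequeOrder.symm {s t : DequeState} (h : s.EqUpToDequeOrder t) :
    t.EqUpToDequeOrder s :=
  ⟨h.inp_eq.symm, h.dq_perm.symm, h.out_eq.symm⟩

lemma eq_of_eqUpToDequeOrder_final {s : DequeState} {l : List ℕ}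
    (h : s.EqUpToDequeOrder ⟨[], [], l⟩) : s = ⟨[], [], l⟩ := by
  obtain ⟨inp, dq, out⟩ := s
  obtain ⟨hinp, hdq, hout⟩ := h
  simp_all [List.perm_nil]

end DequeState

open DequeState

lemma runOps_cons_eq_some {a : Letter} {w : List Letter} {s s'' : DequeState} :
    runOps (a :: w) s = some s'' ↔ ∃ s', applyOp a s = some s' ∧ runOps w s' = some s'' :=
  Option.bind_eq_some_iff

lemma applyOp_final (a : Letter) (l : List ℕ) : applyOp a ⟨[], [], l⟩ = none := by
  cases a <;> rfl

lemma applyOp_input {a : Letter} {s s' : DequeState} (h : applyOp a s = some s')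
    (ha : a.isI = true) :
    ∃ b, s.inp = b :: s'.inp ∧ s'.dq.Perm (b :: s.dq) ∧ s'.out = s.out ∧
      movedElt a s = some b := by
  obtain ⟨_ | ⟨b, r⟩, dq, out⟩ := s <;> cases a <;> simp only [Letter.isI, Bool.false_eq_true] at ha <;>
    simp only [applyOp, reduceCtorEq, Option.some.injEq] at h <;> subst h
  · exact ⟨b, rfl, List.Perm.refl _, rfl, rfl⟩
  · exact ⟨b, rfl, List.perm_append_singleton b dq, rfl, rfl⟩

lemma applyOp_output {a : Letter} {s s' : DequeState} (h : applyOp a s = some s')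
    (ha : a.isI = false) :
    ∃ y, s'.inp = s.inp ∧ s.dq.Perm (y :: s'.dq) ∧ s'.out = s.out ++ [y] ∧
      movedElt a s = some y := by
  obtain ⟨inp, dq, out⟩ := s
  cases a
  · simp [Letter.isI] at ha
  · simp [Letter.isI] at ha
  · cases dq with
    | nil => simp [applyOp] at h
    | cons y d =>
      simp only [applyOp, Option.some.injEq] at h
      subst h
      exact ⟨y, rfl, List.Perm.refl _, rfl, rfl⟩
  · cases hy : dq.getLast? with
    | none => simp [applyOp, hy] at h
    | some y =>
      simp only [applyOp, hy, Option.some.injEq] at h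
      subst h
      refine ⟨y, rfl, ?_, rfl, hy⟩
      conv_lhs => rw [← List.dropLast_append_getLast? y hy]
      exact List.perm_append_singleton y _

lemma applyOp_items_perm {a : Letter} {s s' : DequeState} (h : applyOp a s = some s') :
    s'.items.Perm s.items := by
  cases ha : a.isI
  · obtain ⟨y, hinp, hdq, hout, -⟩ := applyOp_output h ha
    rw [items, items, hinp, hout]
    refine List.Perm.trans ?_ ((hdq.append_left _).append_right _).symm
    exact List.perm_iff_count.2 fun z => by
      simp only [List.count_append, List.count_cons, List.count_nil]; omega
  · obtain ⟨b, hinp, hdq, hout, -⟩ := applyOp_input h ha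
    rw [items, items, hinp, hout]
    refine List.Perm.trans ((hdq.append_left _).append_right _) ?_
    exact List.perm_middle.append_right _

lemma applyOp_out_prefix {a : Letter} {s s' : DequeState} (h : applyOp a s = some s') :
    s.out <+: s'.out := by
  cases ha : a.isI
  · obtain ⟨y, -, -, hout, -⟩ := applyOp_output h ha
    exact hout ▸ List.prefix_append _ _
  · obtain ⟨b, -, -, hout, -⟩ := applyOp_input h ha
    exact hout ▸ List.prefix_rfl

lemma runOps_out_prefix {w : List Letter} {s s' : DequeState} (h : runOps w s = some s') :
    s.out <+: s'.out := by
  induction w generalizing s with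
  | nil => cases h; exact List.prefix_rfl
  | cons a w ih =>
    obtain ⟨s₁, h₁, h₂⟩ := runOps_cons_eq_some.1 h
    exact (applyOp_out_prefix h₁).trans (ih h₂)

lemma OutputsEagerly.tail {a : Letter} {w : List Letter} (h : OutputsEagerly (a :: w)) :
    OutputsEagerly w :=
  ⟨fun hw => h.1 (hw.trans (List.suffix_cons a w).isInfix),
    fun hw => h.2 (hw.trans (List.suffix_cons a w).isInfix)⟩

lemma movedElt_eq_of_runOps_output {a : Letter} {w : List Letter} {s : DequeState}
    {l : List ℕ} (h : runOps (a :: w) s = some ⟨[], [], l⟩) (ha : a.isI = false) :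
    movedElt a s = l[s.out.length]? := by
  obtain ⟨s', h₁, h₂⟩ := runOps_cons_eq_some.1 h
  obtain ⟨y, -, -, hout, hy⟩ := applyOp_output h₁ ha
  obtain ⟨t, rfl⟩ := hout ▸ runOps_out_prefix h₂
  simp [hy]

lemma OutputsEagerly.exists_eq_cons_output {w : List Letter} {s : DequeState} {l : List ℕ}
    {x : ℕ} (hw : OutputsEagerly w) (h : runOps w s = some ⟨[], [], l⟩)
    (hx : l[s.out.length]? = some x) (hxdq : x ∈ s.dq) (hxinp : x ∉ s.inp) :
    ∃ a w', w = a :: w' ∧ a.isI = false := by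
  induction w generalizing s with
  | nil =>
    cases h
    simp at hxdq
  | cons a w ih =>
    obtain ⟨inp, dq, out⟩ := s
    cases a
    · cases inp with
      | nil => simp [runOps, applyOp] at h
      | cons b r =>
        simp only [runOps, applyOp, Option.bind_some] at h
        obtain ⟨hxb, hxr⟩ : x ≠ b ∧ x ∉ r := by simpa using hxinp
        obtain ⟨c, w', rfl, hc⟩ := ih hw.tail h hx (List.mem_cons_of_mem b hxdq) hxr
        cases c
        all_goals simp only [Letter.isI, Bool.true_eq_false] at hc
        · have := movedElt_eq_of_runOps_output h rfl
          simp only [movedElt, List.head?_cons, hx, Option.some.injEq] at this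
          exact absurd this.symm hxb
        · exact absurd ⟨[], w', rfl⟩ hw.1
    · cases inp with
      | nil => simp [runOps, applyOp] at h
      | cons b r =>
        simp only [runOps, applyOp, Option.bind_some] at h
        obtain ⟨hxb, hxr⟩ : x ≠ b ∧ x ∉ r := by simpa using hxinp
        obtain ⟨c, w', rfl, hc⟩ :=
          ih hw.tail h hx (List.mem_append_left [b] hxdq) hxr
        cases c
        all_goals simp only [Letter.isI, Bool.true_eq_false] at hc
        · exact absurd ⟨[], w', rfl⟩ hw.2
        · have := movedElt_eq_of_runOps_output h rfl
          simp only [movedElt, List.getLast?_append, List.getLast?_singleton, Option.some_or, hx,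
            Option.some.injEq] at this
          exact absurd this.symm hxb
    · exact ⟨_, _, rfl, rfl⟩
    · exact ⟨_, _, rfl, rfl⟩

lemma movedElt_eq_of_runOps {a : Letter} {w : List Letter} {s : DequeState} {l : List ℕ}
    (h : runOps (a :: w) s = some ⟨[], [], l⟩) :
    movedElt a s = if a.isI then s.inp.head? else l[s.out.length]? := by
  cases ha : a.isI
  · exact movedElt_eq_of_runOps_output h ha
  · obtain ⟨s', h₁, -⟩ := runOps_cons_eq_some.1 h
    obtain ⟨b, hinp, -, -, hb⟩ := applyOp_input h₁ ha
    simp [hb, hinp]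

lemma OutputsEagerly.isI_eq_false_iff {a : Letter} {w : List Letter} {s : DequeState}
    {l : List ℕ} (hw : OutputsEagerly (a :: w)) (h : runOps (a :: w) s = some ⟨[], [], l⟩)
    (hs : s.items.Nodup) :
    a.isI = false ↔ ∃ x ∈ s.dq, l[s.out.length]? = some x := by
  constructor
  · intro ha
    obtain ⟨s', h₁, -⟩ := runOps_cons_eq_some.1 h
    obtain ⟨y, -, hdq, -, hy⟩ := applyOp_output h₁ ha
    exact ⟨y, hdq.symm.subset List.mem_cons_self, hy ▸ (movedElt_eq_of_runOps_output h ha).symm⟩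
  · rintro ⟨x, hxdq, hx⟩
    have hxinp : x ∉ s.inp := fun hxinp =>
      List.disjoint_of_nodup_append (List.Nodup.of_append_left hs) hxinp hxdq
    obtain ⟨_, _, hcons, ha⟩ := hw.exists_eq_cons_output h hx hxdq hxinp
    cases hcons
    exact ha

namespace DequeState.EqUpToDequeOrder

variable {s t : DequeState}

lemma items_perm (h : s.EqUpToDequeOrder t) : s.items.Perm t.items := by
  rw [items, items, h.inp_eq, h.out_eq]
  exact (h.dq_perm.append_left _).append_right _

lemma step {a b : Letter} {s' t' : DequeState} (h : s.EqUpToDequeOrder t)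
    (hab : a.isI = b.isI) (hmoved : movedElt a s = movedElt b t)
    (hs : applyOp a s = some s') (ht : applyOp b t = some t') :
    s'.EqUpToDequeOrder t' := by
  cases ha : a.isI
  · obtain ⟨y, hsi, hsd, hso, hy⟩ := applyOp_output hs ha
    obtain ⟨z, hti, htd, hto, hz⟩ := applyOp_output ht (hab ▸ ha)
    obtain rfl : y = z := Option.some_injective _ (hy ▸ hz ▸ hmoved)
    exact ⟨by rw [hsi, hti, h.inp_eq], (hsd.symm.trans (h.dq_perm.trans htd)).cons_inv,
      by rw [hso, hto, h.out_eq]⟩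
  · obtain ⟨y, hsi, hsd, hso, hy⟩ := applyOp_input hs ha
    obtain ⟨z, hti, htd, hto, hz⟩ := applyOp_input ht (hab ▸ ha)
    obtain rfl : y = z := Option.some_injective _ (hy ▸ hz ▸ hmoved)
    exact ⟨List.cons_injective (hsi.symm.trans (h.inp_eq.trans hti)),
      hsd.trans ((h.dq_perm.cons y).trans htd.symm), by rw [hso, hto, h.out_eq]⟩

end DequeState.EqUpToDequeOrder

lemma OutputsEagerly.first_step_eq {a b : Letter} {u v : List Letter} {s t : DequeState}
    {l : List ℕ} (hu : OutputsEagerly (a :: u)) (hv : OutputsEagerly (b :: v))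
    (hsu : runOps (a :: u) s = some ⟨[], [], l⟩) (htv : runOps (b :: v) t = some ⟨[], [], l⟩)
    (hst : s.EqUpToDequeOrder t) (hs : s.items.Nodup) :
    a.isI = b.isI ∧ movedElt a s = movedElt b t := by
  have hab : a.isI = b.isI := by
    rw [Bool.eq_iff_iff, ← not_iff_not, Bool.not_eq_true, Bool.not_eq_true,
      hu.isI_eq_false_iff hsu hs, hv.isI_eq_false_iff htv (hst.items_perm.nodup_iff.1 hs)]
    simp only [hst.dq_perm.mem_iff, hst.out_eq]
  refine ⟨hab, ?_⟩
  rw [movedElt_eq_of_runOps hsu, movedElt_eq_of_runOps htv, hab, hst.inp_eq, hst.out_eq]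

def movedFrom (w : List Letter) (s : DequeState) (i : ℕ) : Option ℕ :=
  (runOps (w.take i) s).bind fun s' => (w[i]?).bind fun x => movedElt x s'

@[simp]
lemma movedFrom_cons_zero (a : Letter) (w : List Letter) (s : DequeState) :
    movedFrom (a :: w) s 0 = movedElt a s := by
  simp [movedFrom, runOps]

lemma movedFrom_cons_succ {a : Letter} {w : List Letter} {s s' : DequeState}
    (h : applyOp a s = some s') (i : ℕ) : movedFrom (a :: w) s (i + 1) = movedFrom w s' i := by
  simp [movedFrom, runOps, h]

lemma runOps_final_eq_none {w : List Letter} (hw : w ≠ []) (l : List ℕ) :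
    runOps w ⟨[], [], l⟩ = none := by
  obtain ⟨a, w, rfl⟩ := List.exists_cons_of_ne_nil hw
  simp [runOps, applyOp_final]

theorem OutputsEagerly.map_isI_eq_and_movedFrom_eq {u v : List Letter} {s t : DequeState}
    {l : List ℕ} (hu : OutputsEagerly u) (hv : OutputsEagerly v)
    (hsu : runOps u s = some ⟨[], [], l⟩) (htv : runOps v t = some ⟨[], [], l⟩)
    (hst : s.EqUpToDequeOrder t) (hs : s.items.Nodup) :
    u.map Letter.isI = v.map Letter.isI ∧ ∀ i, movedFrom u s i = movedFrom v t i := by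
  induction u generalizing v s t with
  | nil =>
    cases hsu
    obtain rfl := eq_of_eqUpToDequeOrder_final hst.symm
    obtain rfl : v = [] := by
      by_contra hv
      simp [runOps_final_eq_none hv] at htv
    exact ⟨rfl, fun _ => rfl⟩
  | cons a u ih =>
    cases v with
    | nil =>
      cases htv
      rw [eq_of_eqUpToDequeOrder_final hst, runOps_final_eq_none (List.cons_ne_nil a u)] at hsu
      cases hsu
    | cons b v =>
      obtain ⟨hab, hmoved⟩ := hu.first_step_eq hv hsu htv hst hs
      obtain ⟨s', hs', hsu'⟩ := runOps_cons_eq_some.1 hsu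
      obtain ⟨t', ht', htv'⟩ := runOps_cons_eq_some.1 htv
      obtain ⟨hmap, hmovedFrom⟩ := ih hu.tail hv.tail hsu' htv'
        (hst.step hab hmoved hs' ht') ((applyOp_items_perm hs').nodup_iff.2 hs)
      refine ⟨by simp [hab, hmap], fun i => ?_⟩
      cases i with
      | zero => simpa using hmoved
      | succ i => rw [movedFrom_cons_succ hs', movedFrom_cons_succ ht', hmovedFrom]

/-- If two operation sequences produce the same permutation and both output eagerly,
then they have the same type (the word obtained by erasing subscripts), and for each `i`
the `i`-th operation of each moves the same item. -/
theorem stmt_6 (l : List ℕ) (u v : List Letter)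
    (hu : Produces u l) (hv : Produces v l)
    (heu : OutputsEagerly u) (hev : OutputsEagerly v) :
    u.map Letter.isI = v.map Letter.isI ∧
      ∀ i : ℕ, movedAt u l.length i = movedAt v l.length i := by
  have hinit : (⟨List.range l.length, [], []⟩ : DequeState).items.Nodup := by
    simp [items, List.nodup_range]
  exact heu.map_isI_eq_and_movedFrom_eq hev hu hv ⟨rfl, List.Perm.refl _, rfl⟩ hinit
end

section
/- Every non-empty operation sequence w admits a unique decomposition w = x₁w₁x₂w₂⋯x_{2m-1}w_{2m-1}x_{2m}v where m ≥ 1, each xᵢ ∈ {I₁,I₂,O₁,O₂}, the word x₁x₂⋯x_{2m} is an unbreakable operation sequence, each wᵢ is a (possibly empty) tsip word, and v is an operation sequence. -/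
open Letter

/-- An unbreakable operation sequence: non-empty, contains no tsip sub-word other than
possibly itself or the empty word, and no proper non-empty prefix is an operation
sequence (the deque is never empty strictly inside the sequence). -/
def IsUnbreakable (s : List Letter) : Prop :=
  IsOpSeq s ∧ s ≠ [] ∧
    (∀ u : List Letter, u <:+: s → IsTsip u → u = [] ∨ u = s) ∧
    ∀ p : List Letter, p <+: s → IsOpSeq p → p = [] ∨ p = s

/-- `IsDecomp w xs ws v` asserts that `w = x₁w₁x₂w₂⋯x_{2m-1}w_{2m-1}x_{2m}v`, where
`xs = [x₁,…,x_{2m}]` with `m ≥ 1` forms an unbreakable operation sequence, each `wᵢ` in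
`ws = [w₁,…,w_{2m-1}]` is a (possibly empty) tsip word, and `v` is an operation
sequence. -/
def IsDecomp (w : List Letter) (xs : List Letter) (ws : List (List Letter))
    (v : List Letter) : Prop :=
  (∃ m : ℕ, 0 < m ∧ xs.length = 2 * m) ∧
    xs.length = ws.length + 1 ∧
    IsUnbreakable xs ∧
    (∀ wi ∈ ws, IsTsip wi) ∧
    IsOpSeq v ∧
    w = (List.zipWith (fun x wi => x :: wi) xs (ws ++ [[]])).flatten ++ v

/-! Counting an input as `+1` and an output as `-1` (for tsip words: separately at each end)
turns operation sequences and tsip words into generalised Dyck words. Inserting Dyck words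
after the letters of a word preserves and reflects being Dyck, and also being prime (having
no proper non-empty Dyck prefix) provided nothing is inserted after the last letter. Hence
`x₁w₁⋯x₂ₘ` is forced to be the shortest non-empty operation-sequence prefix of `w`. Inside it,
unbreakability of `x₁⋯x₂ₘ` says exactly that each `wᵢ` is the longest tsip prefix of what
follows `xᵢ`, and such a greedy splitting exists and is unique. -/

open List

section Dyck

variable {α M : Type*} [AddMonoid M]

def weight (f : α → M) (w : List α) : M := (w.map f).sum

@[simp] lemma weight_nil (f : α → M) : weight f [] = 0 := rfl

@[simp] lemma weight_cons (f : α → M) (x : α) (w : List α) :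
    weight f (x :: w) = f x + weight f w := by
  simp [weight]

@[simp] lemma weight_append (f : α → M) (a b : List α) :
    weight f (a ++ b) = weight f a + weight f b := by
  simp [weight]

lemma weight_comp {N : Type*} [AddMonoid N] (g : M →+ N) (f : α → M) (w : List α) :
    weight (g ∘ f) w = g (weight f w) := by
  simp [weight, map_list_sum]

variable [PartialOrder M]

def IsDyck (f : α → M) (w : List α) : Prop :=
  weight f w = 0 ∧ ∀ s, s <+: w → 0 ≤ weight f s

def IsPrimeDyck (f : α → M) (w : List α) : Prop :=
  IsDyck f w ∧ w ≠ [] ∧ ∀ s, s <+: w → IsDyck f s → s = [] ∨ s = w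

variable {f : α → M} {a b c w : List α}

lemma IsDyck.nil (f : α → M) : IsDyck f [] :=
  ⟨rfl, fun s hs => by simp [prefix_nil.1 hs]⟩

lemma IsDyck.append (ha : IsDyck f a) (hb : IsDyck f b) : IsDyck f (a ++ b) := by
  refine ⟨by simp [ha.1, hb.1], fun s hs => ?_⟩
  rcases prefix_or_prefix_of_prefix hs (prefix_append a b) with h | ⟨t, rfl⟩
  · exact ha.2 s h
  · rw [weight_append, ha.1, zero_add]
    exact hb.2 t ((prefix_append_right_inj a).1 hs)

lemma IsDyck.right_of_append (h : IsDyck f (a ++ b)) (ha : IsDyck f a) : IsDyck f b :=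
  ⟨by simpa [ha.1] using h.1,
    fun s hs => by simpa [ha.1] using h.2 (a ++ s) ((prefix_append_right_inj a).2 hs)⟩

lemma IsDyck.left_of_append [AddLeftMono M] (h : IsDyck f (a ++ b)) (hb : b <+: c)
    (hc : IsDyck f c) : IsDyck f a := by
  have ha : 0 ≤ weight f a := h.2 a (prefix_append a b)
  have hab : weight f a + weight f b = 0 := by simpa using h.1
  exact ⟨le_antisymm ((le_add_of_nonneg_right (hc.2 b hb)).trans hab.le) ha,
    fun s hs => h.2 s (hs.trans (prefix_append a b))⟩

lemma IsDyck.comp {N : Type*} [AddMonoid N] [PartialOrder N] (g : M →+ N) (hg : Monotone g)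
    (h : IsDyck f w) : IsDyck (g ∘ f) w :=
  ⟨by rw [weight_comp, h.1, map_zero],
    fun s hs => by rw [weight_comp, ← map_zero g]; exact hg (h.2 s hs)⟩

lemma IsDyck.exists_isPrimeDyck_prefix (h : IsDyck f w) (hne : w ≠ []) :
    ∃ p v, w = p ++ v ∧ IsPrimeDyck f p ∧ IsDyck f v := by
  classical
  have hex : ∃ n, 0 < n ∧ IsDyck f (w.take n) :=
    ⟨w.length, length_pos_iff.2 hne, by rwa [take_length]⟩
  obtain ⟨hn, hd⟩ := Nat.find_spec hex
  refine ⟨w.take (Nat.find hex), w.drop (Nat.find hex), (take_append_drop _ _).symm,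
    ⟨hd, by simp [hne, hn.ne'], fun s hs hsd => ?_⟩,
    (take_append_drop _ w ▸ h).right_of_append hd⟩
  rw [or_iff_not_imp_left]
  intro hs0
  have hsw : s = w.take s.length := prefix_iff_eq_take.1 (hs.trans (take_prefix _ w))
  have hmin : Nat.find hex ≤ s.length :=
    Nat.find_min' hex ⟨length_pos_iff.2 hs0, hsw ▸ hsd⟩
  rw [hsw, le_antisymm (hs.length_le.trans (length_take_le _ _)) hmin]

lemma IsPrimeDyck.eq_of_append_eq {p q v v' : List α} (hp : IsPrimeDyck f p)
    (hq : IsPrimeDyck f q) (h : p ++ v = q ++ v') : p = q ∧ v = v' := by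
  obtain rfl : p = q := by
    rcases prefix_or_prefix_of_prefix (prefix_append p v) (h ▸ prefix_append q v') with h' | h'
    · exact (hq.2.2 p h' hp.1).resolve_left hp.2.1
    · exact ((hp.2.2 q h' hq.1).resolve_left hq.2.1).symm
  exact ⟨rfl, append_cancel_left h⟩

end Dyck

section Weave

variable {α : Type*} {l m : List (α × List α)}

def weave (l : List (α × List α)) : List α := l.flatMap fun p => p.1 :: p.2

@[simp] lemma weave_nil : weave ([] : List (α × List α)) = [] := rfl

@[simp] lemma weave_cons (x : α) (w : List α) (l : List (α × List α)) :
    weave ((x, w) :: l) = x :: (w ++ weave l) := rfl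

@[simp] lemma weave_append (l m : List (α × List α)) : weave (l ++ m) = weave l ++ weave m := by
  simp [weave]

@[simp] lemma weave_eq_nil_iff : weave l = [] ↔ l = [] := by
  cases l <;> simp [weave]

lemma weave_zip (xs : List α) (ws : List (List α)) :
    weave (xs.zip ws) = (zipWith (fun x w => x :: w) xs ws).flatten := by
  simp [weave, flatMap_def, zip_eq_zipWith, map_zipWith]

lemma List.IsPrefix.weave (h : m <+: l) : weave m <+: weave l := by
  obtain ⟨r, rfl⟩ := h
  simp

lemma eq_of_prefix_of_weave_eq (h : m <+: l) (he : weave m = weave l) : m = l := by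
  obtain ⟨r, rfl⟩ := h
  simpa using he

lemma prefix_weave_cases {s : List α} (hs : s <+: weave l) :
    (∃ m, m <+: l ∧ s = weave m) ∨
      ∃ m x w r wp, l = m ++ (x, w) :: r ∧ wp <+: w ∧ s = weave m ++ x :: wp := by
  induction l generalizing s with
  | nil => exact .inl ⟨[], prefix_rfl, by simpa using hs⟩
  | cons p t ih =>
    obtain ⟨x, w⟩ := p
    rcases prefix_cons_iff.1 hs with rfl | ⟨s', rfl, hs'⟩
    · exact .inl ⟨[], nil_prefix, rfl⟩
    rcases prefix_or_prefix_of_prefix hs' (prefix_append w (weave t)) with h | ⟨d, rfl⟩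
    · exact .inr ⟨[], x, w, t, s', rfl, h, rfl⟩
    rcases ih ((prefix_append_right_inj w).1 hs') with
      ⟨m, hm, rfl⟩ | ⟨m, y, u, r, wp, rfl, hwp, rfl⟩
    · exact .inl ⟨(x, w) :: m, cons_prefix_cons.2 ⟨rfl, hm⟩, by simp⟩
    · exact .inr ⟨(x, w) :: m, y, u, r, wp, rfl, hwp, by simp⟩

end Weave

section DyckWeave

variable {α M : Type*} [AddMonoid M] [PartialOrder M] {f : α → M} {l m : List (α × List α)}

lemma weight_weave (hl : ∀ p ∈ l, IsDyck f p.2) :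
    weight f (weave l) = weight f (l.map Prod.fst) := by
  induction l with
  | nil => rfl
  | cons p t ih =>
    obtain ⟨x, w⟩ := p
    simp [(hl (x, w) (by simp)).1, ih fun q hq => hl q (by simp [hq])]

variable [AddLeftMono M]

lemma isDyck_weave_iff (hl : ∀ p ∈ l, IsDyck f p.2) :
    IsDyck f (weave l) ↔ IsDyck f (l.map Prod.fst) := by
  have hsub : ∀ {m}, m <+: l → ∀ p ∈ m, IsDyck f p.2 := fun hm p hp => hl p (hm.subset hp)
  rw [IsDyck, IsDyck, weight_weave hl]
  refine and_congr_right fun _ => ⟨fun h q hq => ?_, fun h s hs => ?_⟩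
  · obtain ⟨m, hm, rfl⟩ := prefix_map_iff.1 hq
    rw [← weight_weave (hsub hm)]
    exact h _ hm.weave
  · rcases prefix_weave_cases hs with ⟨m, hm, rfl⟩ | ⟨m, x, w, r, wp, rfl, hwp, rfl⟩
    · rw [weight_weave (hsub hm)]
      exact h _ (hm.map _)
    · have hx := h (m.map Prod.fst ++ [x]) ⟨r.map Prod.fst, by simp⟩
      have hw := (hl (x, w) (by simp)).2 wp hwp
      have hm : ∀ p ∈ m, IsDyck f p.2 := fun p hp => hl p (by simp [hp])
      have : weight f (weave m ++ x :: wp) = weight f (m.map Prod.fst ++ [x]) + weight f wp := by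
        simp [weight_weave hm, add_assoc]
      exact this ▸ add_nonneg hx hw

lemma isDyck_weave_concat_iff {x : α} (hm : ∀ p ∈ m, IsDyck f p.2) :
    IsDyck f (weave m ++ [x]) ↔ IsDyck f (m.map Prod.fst ++ [x]) := by
  have hmx : ∀ p ∈ m ++ [(x, [])], IsDyck f p.2 := by
    simp only [mem_append, mem_singleton]
    rintro p (hp | rfl)
    exacts [hm p hp, IsDyck.nil f]
  simpa using isDyck_weave_iff hmx

lemma IsPrimeDyck.of_weave (hl : ∀ p ∈ l, IsDyck f p.2) (h : IsPrimeDyck f (weave l)) :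
    IsPrimeDyck f (l.map Prod.fst) := by
  refine ⟨(isDyck_weave_iff hl).1 h.1, by simpa using h.2.1, fun q hq hqd => ?_⟩
  obtain ⟨m, hm, rfl⟩ := prefix_map_iff.1 hq
  rcases h.2.2 _ hm.weave ((isDyck_weave_iff fun p hp => hl p (hm.subset hp)).2 hqd) with h0 | h0
  · simp_all
  · rw [eq_of_prefix_of_weave_eq hm h0]
    exact .inr rfl

lemma IsPrimeDyck.getLast?_snd (hl : ∀ p ∈ l, IsDyck f p.2)
    (h : IsPrimeDyck f (weave l)) : (l.map Prod.snd).getLast? = some [] := by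
  obtain ⟨m, ⟨x, w⟩, rfl⟩ := (eq_nil_or_concat' l).resolve_left (by rintro rfl; exact h.2.1 rfl)
  have hx : IsDyck f (weave m ++ [x]) :=
    IsDyck.left_of_append (by simpa using h.1) prefix_rfl (hl (x, w) (by simp))
  rcases h.2.2 _ ⟨w, by simp⟩ hx with h0 | h0 <;> simp_all

lemma IsPrimeDyck.weave (hl : ∀ p ∈ l, IsDyck f p.2)
    (h : IsPrimeDyck f (l.map Prod.fst)) (hlast : (l.map Prod.snd).getLast? = some []) :
    IsPrimeDyck f (weave l) := by
  refine ⟨(isDyck_weave_iff hl).2 h.1, by simpa using h.2.1, fun s hs hsd => ?_⟩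
  rcases prefix_weave_cases hs with ⟨m, hm, rfl⟩ | ⟨m, x, w, r, wp, rfl, hwp, rfl⟩
  · rcases h.2.2 _ (hm.map _)
      ((isDyck_weave_iff fun p hp => hl p (hm.subset hp)).1 hsd) with h0 | h0
    · simp_all
    · rw [hm.eq_of_length (by simpa using congrArg length h0)]
      exact .inr rfl
  · have hx : IsDyck f (m.map Prod.fst ++ [x]) :=
      (isDyck_weave_concat_iff fun p hp => hl p (by simp [hp])).1
        (IsDyck.left_of_append (by simpa using hsd) hwp (hl (x, w) (by simp)))
    rcases h.2.2 _ ⟨r.map Prod.fst, by simp⟩ hx with h0 | h0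
    · simp at h0
    · obtain rfl : r = [] := by simpa using congrArg length h0
      obtain rfl : w = [] := by simpa using hlast
      simp [prefix_nil.1 hwp]

lemma eq_nil_of_isDyck_prefix_weave (hl : ∀ p ∈ l, IsDyck f p.2)
    (hskel : ∀ q, q <+: l.map Prod.fst → IsDyck f q → q = []) {d : List α}
    (hd : d <+: weave l) (hdd : IsDyck f d) : d = [] := by
  rcases prefix_weave_cases hd with ⟨m, hm, rfl⟩ | ⟨m, x, w, r, wp, rfl, hwp, rfl⟩
  · simpa using hskel _ (hm.map _) ((isDyck_weave_iff fun p hp => hl p (hm.subset hp)).1 hdd)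
  · have hx : IsDyck f (m.map Prod.fst ++ [x]) :=
      (isDyck_weave_concat_iff fun p hp => hl p (by simp [hp])).1
        (IsDyck.left_of_append (by simpa using hdd) hwp (hl (x, w) (by simp)))
    simpa using hskel _ ⟨r.map Prod.fst, by simp⟩ hx

end DyckWeave

section Greedy

variable {α : Type*} (P : List α → Prop)

lemma exists_longest_prefix (h : P []) (t : List α) :
    ∃ u, u <+: t ∧ P u ∧ ∀ u', u' <+: t → P u' → u'.length ≤ u.length := by
  classical
  let Q n := P (t.take n)
  have hn := Nat.findGreatest_le (P := Q) t.length
  refine ⟨t.take (Nat.findGreatest Q t.length), take_prefix _ _,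
    Nat.findGreatest_spec (P := Q) (Nat.zero_le _) (by simpa [Q] using h), fun u' hu' hPu' => ?_⟩
  rw [length_take_of_le hn]
  exact Nat.le_findGreatest hu'.length_le (show P (t.take u'.length) from
    prefix_iff_eq_take.1 hu' ▸ hPu')

def IsGreedy : List (α × List α) → Prop
  | [] => True
  | (_, w) :: t => (∀ u, u <+: w ++ weave t → P u → u.length ≤ w.length) ∧ IsGreedy t

variable {P}

lemma IsGreedy.length_le {m r : List (α × List α)} {x : α} {w u : List α}
    (h : IsGreedy P (m ++ (x, w) :: r)) (hu : u <+: w ++ weave r) (hPu : P u) :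
    u.length ≤ w.length := by
  induction m with
  | nil => exact h.1 u hu hPu
  | cons p m ih =>
    obtain ⟨_, _⟩ := p
    exact ih h.2

theorem exists_isGreedy (hP : P []) :
    ∀ r : List α, ∃ l, weave l = r ∧ (∀ p ∈ l, P p.2) ∧ IsGreedy P l
  | [] => ⟨[], rfl, by simp, trivial⟩
  | x :: t => by
    obtain ⟨u, hut, hu, hmax⟩ := exists_longest_prefix P hP t
    obtain ⟨l, hl, hlP, hg⟩ := exists_isGreedy hP (t.drop u.length)
    have ht : u ++ weave l = t := by
      obtain ⟨t', rfl⟩ := hut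
      simp [hl]
    exact ⟨(x, u) :: l, by simp [ht], by simpa [hu] using hlP, ht ▸ hmax, hg⟩
termination_by r => r.length
decreasing_by simp

theorem IsGreedy.eq_of_weave_eq :
    ∀ {l l' : List (α × List α)}, (∀ p ∈ l, P p.2) → (∀ p ∈ l', P p.2) →
      IsGreedy P l → IsGreedy P l' → weave l = weave l' → l = l'
  | [], [], _, _, _, _, _ => rfl
  | [], (_, _) :: _, _, _, _, _, h => by simp at h
  | (_, _) :: _, [], _, _, _, _, h => by simp at h
  | (x, w) :: t, (x', w') :: t', hl, hl', hg, hg', h => by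
    simp only [weave_cons, cons.injEq] at h
    obtain ⟨rfl, h⟩ := h
    have hw : w <+: w ++ weave t := prefix_append _ _
    have hw' : w' <+: w ++ weave t := h ▸ prefix_append _ _
    have hlen : w.length = w'.length :=
      le_antisymm (hg'.1 w (h ▸ hw) (hl _ mem_cons_self)) (hg.1 w' hw' (hl' _ mem_cons_self))
    obtain rfl : w = w' := (prefix_of_prefix_length_le hw hw' hlen.le).eq_of_length hlen
    rw [IsGreedy.eq_of_weave_eq (fun p hp => hl p (mem_cons_of_mem _ hp))
      (fun p hp => hl' p (mem_cons_of_mem _ hp)) hg.2 hg'.2 (append_cancel_left h)]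

end Greedy

lemma isGreedy_of_forall_infix {α M : Type*} [AddMonoid M] [PartialOrder M] [AddLeftMono M]
    {f : α → M} : ∀ {l : List (α × List α)}, (∀ p ∈ l, IsDyck f p.2) →
      (∀ u, u <:+: (l.map Prod.fst).tail → IsDyck f u → u = []) → IsGreedy (IsDyck f) l
  | [], _, _ => trivial
  | (x, w) :: t, hl, h => by
    have ht : ∀ p ∈ t, IsDyck f p.2 := fun p hp => hl p (mem_cons_of_mem _ hp)
    refine ⟨fun u hu hud => ?_,
      isGreedy_of_forall_infix ht fun u hu => h u (hu.trans (tail_suffix _).isInfix)⟩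
    rcases prefix_or_prefix_of_prefix hu (prefix_append w _) with h' | ⟨d, rfl⟩
    · exact h'.length_le
    · have hd : d = [] :=
        eq_nil_of_isDyck_prefix_weave ht (fun q hq => h q hq.isInfix)
          ((prefix_append_right_inj w).1 hu) (hud.right_of_append (hl _ mem_cons_self))
      simp [hd]

section Letters

def Letter.net : Letter → ℤ
  | I1 | I2 => 1
  | O1 | O2 => -1

def Letter.netByEnd : Letter → ℤ × ℤ
  | I1 => (1, 0)
  | O1 => (-1, 0)
  | I2 => (0, 1)
  | O2 => (0, -1)

lemma forall_prefix_iff_forall_take {α : Type*} {P : List α → Prop} {w : List α} :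
    (∀ s, s <+: w → P s) ↔ ∀ n, P (w.take n) :=
  ⟨fun h n => h _ (take_prefix n w), fun h _ hs => prefix_iff_eq_take.1 hs ▸ h _⟩

lemma weight_net (w : List Letter) : weight Letter.net w = countI w - countO w := by
  induction w with
  | nil => rfl
  | cons x w ih =>
    cases x <;> simp [ih, countI, countO, Letter.isI, Letter.net, filter_cons] <;> ring

lemma weight_netByEnd (w : List Letter) : weight Letter.netByEnd w =
    ((w.count I1 : ℤ) - w.count O1, (w.count I2 : ℤ) - w.count O2) := by
  induction w with
  | nil => rfl
  | cons x w ih => cases x <;> simp [ih, Letter.netByEnd] <;> ring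

lemma isOpSeq_iff_isDyck {w : List Letter} : IsOpSeq w ↔ IsDyck Letter.net w := by
  simp only [IsOpSeq, IsDyck, weight_net, forall_prefix_iff_forall_take, sub_eq_zero, sub_nonneg,
    Nat.cast_inj, Nat.cast_le]

lemma isTsip_iff_isDyck {w : List Letter} : IsTsip w ↔ IsDyck Letter.netByEnd w := by
  simp only [IsTsip, IsDyck, weight_netByEnd, forall_prefix_iff_forall_take, Prod.mk_eq_zero,
    Prod.le_def, Prod.fst_zero, Prod.snd_zero, sub_eq_zero, sub_nonneg, Nat.cast_inj, Nat.cast_le,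
    forall_and, and_assoc]

lemma IsDyck.net_of_netByEnd {w : List Letter} (h : IsDyck Letter.netByEnd w) :
    IsDyck Letter.net w := by
  have : Letter.net = AddMonoidHom.coprod (.id ℤ) (.id ℤ) ∘ Letter.netByEnd := by
    funext x
    cases x <;> rfl
  rw [this]
  exact h.comp _ fun _ _ hab => add_le_add (Prod.le_def.1 hab).1 (Prod.le_def.1 hab).2

lemma isUnbreakable_iff {s : List Letter} : IsUnbreakable s ↔
    IsPrimeDyck Letter.net s ∧ ∀ u, u <:+: s → IsDyck Letter.netByEnd u → u = [] ∨ u = s := by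
  simp only [IsUnbreakable, IsPrimeDyck, isOpSeq_iff_isDyck, isTsip_iff_isDyck]
  tauto

lemma IsOpSeq.exists_length_eq {w : List Letter} (h : IsOpSeq w) (hne : w ≠ []) :
    ∃ m, 0 < m ∧ w.length = 2 * m := by
  have hlen : w.length = countI w + countO w := length_eq_length_filter_add Letter.isI
  have hpos := length_pos_iff.2 hne
  have hIO := h.1
  exact ⟨countI w, by omega, by omega⟩

lemma isUnbreakable_of_isGreedy {l : List (Letter × List Letter)}
    (hl : ∀ p ∈ l, IsDyck Letter.netByEnd p.2) (hg : IsGreedy (IsDyck Letter.netByEnd) l)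
    (hp : IsPrimeDyck Letter.net (weave l)) : IsUnbreakable (l.map Prod.fst) := by
  refine isUnbreakable_iff.2 ⟨hp.of_weave fun p hp => (hl p hp).net_of_netByEnd,
    fun u hu hud => ?_⟩
  obtain ⟨a, c, h⟩ := hu
  obtain ⟨l₁₂, l₃, rfl, h₁₂, rfl⟩ := map_eq_append_iff.1 h.symm
  obtain ⟨l₁, l₂, rfl, rfl, rfl⟩ := map_eq_append_iff.1 h₁₂
  have hw₂ := (isDyck_weave_iff fun p hp => hl p (by simp [hp])).2 hud
  rcases eq_or_ne l₂ [] with rfl | hne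
  · exact .inl rfl
  rcases eq_nil_or_concat' l₁ with rfl | ⟨l₀, ⟨x, w⟩, rfl⟩
  · rcases hp.2.2 (weave l₂) (by simp) hw₂.net_of_netByEnd with h0 | h0
    · exact absurd (weave_eq_nil_iff.1 h0) hne
    · obtain rfl : l₃ = [] := by simpa using h0
      simp
  · -- the greedy choice of `w` would have absorbed `weave l₂`
    have := (show IsGreedy _ (l₀ ++ (x, w) :: (l₂ ++ l₃)) by simpa using hg).length_le
      (u := w ++ weave l₂) (by simp) ((hl (x, w) (by simp)).append hw₂)
    simp_all

lemma IsUnbreakable.isGreedy {l : List (Letter × List Letter)}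
    (hl : ∀ p ∈ l, IsDyck Letter.netByEnd p.2) (h : IsUnbreakable (l.map Prod.fst)) :
    IsGreedy (IsDyck Letter.netByEnd) l := by
  refine isGreedy_of_forall_infix hl fun u hu hud => ?_
  have hlen := hu.length_le
  have hpos := length_pos_iff.2 h.2.1
  refine ((isUnbreakable_iff.1 h).2 u (hu.trans (tail_suffix _).isInfix) hud).resolve_right ?_
  rintro rfl
  simp only [length_tail] at hlen
  omega

lemma isDecomp_weave {l : List (Letter × List Letter)} {v : List Letter}
    (hl : ∀ p ∈ l, IsTsip p.2) (hu : IsUnbreakable (l.map Prod.fst))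
    (hlast : (l.map Prod.snd).getLast? = some []) (hv : IsOpSeq v) :
    IsDecomp (weave l ++ v) (l.map Prod.fst) (l.map Prod.snd).dropLast v := by
  have hsnd : (l.map Prod.snd).dropLast ++ [[]] = l.map Prod.snd :=
    dropLast_append_getLast? _ hlast
  refine ⟨hu.1.exists_length_eq hu.2.1, by simpa using (congrArg length hsnd).symm, hu,
    fun wi hwi => ?_, hv, ?_⟩
  · obtain ⟨p, hp, rfl⟩ := mem_map.1 (dropLast_subset _ hwi)
    exact hl p hp
  · simp [hsnd, weave, flatMap_def, zipWith_map, zipWith_self]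

lemma IsDecomp.exists_eq_weave {w xs v : List Letter} {ws : List (List Letter)}
    (h : IsDecomp w xs ws v) : ∃ l, xs = l.map Prod.fst ∧ ws = (l.map Prod.snd).dropLast ∧
      (l.map Prod.snd).getLast? = some [] ∧ (∀ p ∈ l, IsTsip p.2) ∧ w = weave l ++ v := by
  obtain ⟨-, hlen, -, hws, -, rfl⟩ := h
  have hlen' : xs.length = (ws ++ [[]]).length := by simp [hlen]
  have hsnd : (xs.zip (ws ++ [[]])).map Prod.snd = ws ++ [[]] := map_snd_zip hlen'.ge
  refine ⟨xs.zip (ws ++ [[]]), (map_fst_zip hlen'.le).symm, by simp [hsnd], by simp [hsnd],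
    fun p hp => ?_, by rw [weave_zip]⟩
  rcases mem_append.1 (hsnd ▸ mem_map_of_mem hp : p.2 ∈ ws ++ [[]]) with h | h
  · exact hws _ h
  · rw [mem_singleton.1 h]
    exact isTsip_iff_isDyck.2 (.nil _)

end Letters

/-- Every non-empty operation sequence `w` admits a unique decomposition
`w = x₁w₁x₂w₂⋯x_{2m-1}w_{2m-1}x_{2m}v` with `x₁⋯x_{2m}` an unbreakable operation
sequence, each `wᵢ` a tsip word, and `v` an operation sequence. -/
theorem stmt_8 (w : List Letter) (hw : IsOpSeq w) (hne : w ≠ []) :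
    ∃! d : List Letter × List (List Letter) × List Letter,
      IsDecomp w d.1 d.2.1 d.2.2 := by
  obtain ⟨p, v, rfl, hp, hv⟩ := (isOpSeq_iff_isDyck.1 hw).exists_isPrimeDyck_prefix hne
  obtain ⟨l, rfl, hl, hg⟩ := exists_isGreedy (IsDyck.nil Letter.netByEnd) p
  have hlnet : ∀ q ∈ l, IsDyck Letter.net q.2 := fun q hq => (hl q hq).net_of_netByEnd
  refine ⟨(l.map Prod.fst, (l.map Prod.snd).dropLast, v),
    isDecomp_weave (fun q hq => isTsip_iff_isDyck.2 (hl q hq)) (isUnbreakable_of_isGreedy hl hg hp)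
      (hp.getLast?_snd hlnet) (isOpSeq_iff_isDyck.2 hv), ?_⟩
  rintro ⟨xs, ws, v'⟩ hd
  have hxs := hd.2.2.1
  obtain ⟨l', rfl, rfl, hlast', hl', heq⟩ := hd.exists_eq_weave
  replace hl' : ∀ q ∈ l', IsDyck Letter.netByEnd q.2 := fun q hq => isTsip_iff_isDyck.1 (hl' q hq)
  have hp' := (isUnbreakable_iff.1 hxs).1.weave (fun q hq => (hl' q hq).net_of_netByEnd) hlast'
  obtain ⟨hweave, rfl⟩ := hp'.eq_of_append_eq hp heq.symm
  rw [(hxs.isGreedy hl').eq_of_weave_eq hl' hl hg hweave]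
end

section
/- Let D and P be formal power series in t with D(0) = P(0) = 1 satisfying 2D = 2 + t + 2Pt - 2Pt² - t·√(1 - 4P + 4P² - 8P²t + 4P²t² - 4Pt), where √ denotes the formal power-series square root of a series with constant term 1. Then P = (D-1)(D-t-1) / (2t(D - 1 - Dt)). -/
open PowerSeries

/-! Isolating `t·S` in the defining equation of `D` and squaring eliminates the square root `S`;
the resulting polynomial relation is four times the claimed identity, and `4` is invertible. -/

theorem mul_two_mul_eq_of_two_mul_eq_sub_mul_sqrt {R : Type*} [CommRing R] [Algebra ℚ R]
    {D P S t : R}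
    (hS : S ^ 2 = 1 - 4 * P + 4 * P ^ 2 - 8 * P ^ 2 * t + 4 * P ^ 2 * t ^ 2 - 4 * P * t)
    (hD : 2 * D = 2 + t + 2 * P * t - 2 * P * t ^ 2 - t * S) :
    P * (2 * t * (D - 1 - D * t)) = (D - 1) * (D - t - 1) := by
  have h4 : (4 : R) * (P * (2 * t * (D - 1 - D * t))) = 4 * ((D - 1) * (D - t - 1)) := by
    linear_combination (2 + t + 2 * P * t - 2 * P * t ^ 2 - 2 * D + t * S) * hD - t ^ 2 * hS
  have hunit : IsUnit (4 : R) := by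
    simpa only [map_ofNat] using (IsUnit.mk0 (4 : ℚ) four_ne_zero).map (algebraMap ℚ R)
  exact hunit.mul_left_cancel h4

theorem stmt_11_general (D P S : PowerSeries ℚ)
    (hS : S ^ 2 = 1 - 4 * P + 4 * P ^ 2 - 8 * P ^ 2 * X + 4 * P ^ 2 * X ^ 2 - 4 * P * X)
    (hEq : 2 * D = 2 + X + 2 * P * X - 2 * P * X ^ 2 - X * S) :
    P * (2 * X * (D - 1 - D * X)) = (D - 1) * (D - X - 1) :=
  mul_two_mul_eq_of_two_mul_eq_sub_mul_sqrt hS hEq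

/-- Let `D` and `P` be formal power series in `t` over `ℚ` with `D(0) = P(0) = 1` satisfying
`2D = 2 + t + 2Pt - 2Pt² - t·√(1 - 4P + 4P² - 8P²t + 4P²t² - 4Pt)`, where `S` is the formal
square root (a power series with constant term `1` whose square is the radicand). Then
`P = (D-1)(D-t-1) / (2t(D - 1 - Dt))`, equivalently
`2tP(D - 1 - Dt) = (D-1)(D-t-1)`. -/
theorem stmt_11 (D P S : PowerSeries ℚ)
    (hD0 : constantCoeff D = 1) (hP0 : constantCoeff P = 1)
    (hS0 : constantCoeff S = 1)
    (hS : S ^ 2 = 1 - 4 * P + 4 * P ^ 2 - 8 * P ^ 2 * X + 4 * P ^ 2 * X ^ 2 - 4 * P * X)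
    (hEq : 2 * D = 2 + X + 2 * P * X - 2 * P * X ^ 2 - X * S) :
    P * (2 * X * (D - 1 - D * X)) = (D - 1) * (D - X - 1) :=
  stmt_11_general D P S hS hEq
end

section
/- The number of quarter-plane loops of length 2n (walks with unit steps N,E,S,W starting and ending at the origin, confined to ℕ×ℕ) equals C_n · C_{n+1}, where C_n = (1/(n+1))·binom(2n,n) is the n-th Catalan number. -/
/-!
The horizontal and vertical moves of a quarter-plane walk form two independent `±1` walks
confined to `ℕ`, interleaved in any order. A loop of length `2n` is therefore a choice of `2k`
horizontal positions among `2n` together with two Dyck paths of semilengths `k` and `n - k`,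
so there are `∑ₖ C(2n, 2k) Cₖ Cₙ₋ₖ` of them. Termwise `C(2n, 2k) Cₖ Cₙ₋ₖ` is
`(2n)! / (n! (n+2)!) · C(n, k) C(n+2, k+1)`, and by Vandermonde the last products sum to
`C(2n+2, n+1)`, which turns the total into `Cₙ Cₙ₊₁`.
-/

open Finset
open scoped Nat

/-- The four unit steps: `0 = E = (1,0)`, `1 = W = (-1,0)`, `2 = N = (0,1)`, `3 = S = (0,-1)`. -/
def stepVec : Fin 4 → ℤ × ℤ := ![(1, 0), (-1, 0), (0, 1), (0, -1)]

/-- The endpoint of a walk (as a sum of its steps). -/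
def walkSum (l : List (Fin 4)) : ℤ × ℤ := (l.map stepVec).sum

/-- A walk stays in the quarter plane: every partial sum has nonnegative coordinates. -/
def IsQuarterWalk (l : List (Fin 4)) : Prop :=
  ∀ m : ℕ, 0 ≤ (walkSum (l.take m)).1 ∧ 0 ≤ (walkSum (l.take m)).2

section Walks

variable {σ V : Type*} [AddCommGroup V] (step : σ → V) (R : V → Prop)

def IsConfinedWalkToZero (v : V) (l : List σ) : Prop :=
  (∀ m, R (v + ((l.take m).map step).sum)) ∧ v + (l.map step).sum = 0

variable {step R}

theorem isConfinedWalkToZero_nil {v : V} : IsConfinedWalkToZero step R v [] ↔ R v ∧ v = 0 := by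
  simp [IsConfinedWalkToZero]

theorem isConfinedWalkToZero_cons {v : V} {s : σ} {l : List σ} :
    IsConfinedWalkToZero step R v (s :: l) ↔
      R v ∧ IsConfinedWalkToZero step R (v + step s) l := by
  simp only [IsConfinedWalkToZero, List.map_cons, List.sum_cons, ← add_assoc]
  constructor
  · rintro ⟨hR, hsum⟩
    exact ⟨by simpa using hR 0, fun m => by simpa [← add_assoc] using hR (m + 1), hsum⟩
  · rintro ⟨hv, hR, hsum⟩
    refine ⟨fun m => ?_, hsum⟩
    cases m with
    | zero => simpa using hv
    | succ m => simpa [← add_assoc] using hR m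

variable (step R)

noncomputable def walkCount (N : ℕ) (v : V) : ℕ :=
  Nat.card {f : Fin N → σ // IsConfinedWalkToZero step R v (List.ofFn f)}

open Classical in
theorem walkCount_zero (v : V) : walkCount step R 0 v = if R v ∧ v = 0 then 1 else 0 := by
  simp only [walkCount, List.ofFn_zero, isConfinedWalkToZero_nil]
  split_ifs with h
  · exact Nat.card_eq_one_iff_unique.mpr ⟨inferInstance, ⟨⟨Fin.elim0, h⟩⟩⟩
  · simp [h]

open Classical in
theorem walkCount_succ [Fintype σ] (N : ℕ) (v : V) :
    walkCount step R (N + 1) v = if R v then ∑ s, walkCount step R N (v + step s) else 0 := by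
  have e : {f : Fin (N + 1) → σ // IsConfinedWalkToZero step R v (List.ofFn f)} ≃
      {p : σ × (Fin N → σ) // IsConfinedWalkToZero step R v (p.1 :: List.ofFn p.2)} :=
    (Fin.consEquiv fun _ => σ).symm.subtypeEquiv fun f => by rw [List.ofFn_succ]; rfl
  rw [walkCount, Nat.card_congr (e.trans (Equiv.subtypeProdEquivSigmaSubtype fun s g =>
    IsConfinedWalkToZero step R v (s :: List.ofFn g))), Nat.card_sigma]
  simp only [isConfinedWalkToZero_cons]
  split_ifs with hv
  · simp [hv, walkCount]
  · simp [hv]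

theorem walkCount_eq_zero_of_not [Fintype σ] {v : V} (hv : ¬ R v) (N : ℕ) :
    walkCount step R N v = 0 := by
  cases N with
  | zero => simp [walkCount_zero, hv]
  | succ N => simp [walkCount_succ, hv]

theorem walkCount_comp_equiv [Fintype σ] {τ : Type*} [Fintype τ] (e : τ ≃ σ) (N : ℕ) (v : V) :
    walkCount (step ∘ e) R N v = walkCount step R N v := by
  induction N generalizing v with
  | zero => simp [walkCount_zero]
  | succ N ih => simp [walkCount_succ, ih, e.sum_comp fun s => walkCount step R N (v + step s)]

end Walks

section Product

variable {σ τ V W : Type*} [Fintype σ] [Fintype τ] [AddCommGroup V] [AddCommGroup W]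
  (a : σ → V) (b : τ → W) (P : V → Prop) (Q : W → Prop)

-- Peeling off the first step of a shuffle of a `σ`-walk and a `τ`-walk is Pascal's rule.
theorem walkCount_sumElim (N : ℕ) (v : V) (w : W) :
    walkCount (Sum.elim (fun s => (a s, 0)) (fun t => (0, b t))) (fun p => P p.1 ∧ Q p.2) N
        (v, w) =
      ∑ ij ∈ antidiagonal N, N.choose ij.1 * (walkCount a P ij.1 v * walkCount b Q ij.2 w) := by
  induction N generalizing v w with
  | zero =>
    simp only [walkCount_zero, Prod.mk_eq_zero, Nat.antidiagonal_zero, sum_singleton,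
      Nat.choose_self, one_mul, ite_zero_mul_ite_zero]
    congr 1
    simp only [Prod.ext_iff, Prod.fst_zero, Prod.snd_zero, and_and_and_comm]
  | succ N ih =>
    by_cases hv : P v
    swap
    · rw [walkCount_eq_zero_of_not _ _ (fun h => hv h.1)]
      exact (sum_eq_zero fun ij _ => by simp [walkCount_eq_zero_of_not a P hv]).symm
    by_cases hw : Q w
    swap
    · rw [walkCount_eq_zero_of_not _ _ (fun h => hw h.2)]
      exact (sum_eq_zero fun ij _ => by simp [walkCount_eq_zero_of_not b Q hw]).symm
    have pascal := sum_antidiagonal_choose_succ_mul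
      (fun i j => walkCount a P i v * walkCount b Q j w) N
    simp only [Nat.cast_id] at pascal
    rw [walkCount_succ, if_pos ⟨hv, hw⟩, Fintype.sum_sum_type, pascal, add_comm]
    simp only [Sum.elim_inl, Sum.elim_inr, Prod.mk_add_mk, add_zero, ih]
    rw [sum_comm, sum_comm (s := univ)]
    congr 1
    · refine sum_congr rfl fun ij _ => ?_
      rw [← mul_sum, ← mul_sum, walkCount_succ, if_pos hw]
    · refine sum_congr rfl fun ij hij => ?_
      rw [Nat.choose_symm_of_eq_add (mem_antidiagonal.mp hij).symm, ← mul_sum, ← sum_mul,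
        walkCount_succ, if_pos hv]

end Product

theorem Nat.card_subtype_ofFn {α : Type*} (p : List α → Prop) (N : ℕ) :
    Nat.card {f : Fin N → α // p (List.ofFn f)} = Nat.card {l : List α // l.length = N ∧ p l} :=
  Nat.card_congr <| ((Equiv.vectorEquivFin α N).symm.subtypeEquiv fun f => by
    rw [← List.Vector.toList_ofFn]; rfl).trans
    (Equiv.subtypeSubtypeEquivSubtypeInter _ p)

namespace DyckStep

instance : Fintype DyckStep := ⟨{U, D}, fun s => by cases s <;> simp⟩

def toInt : DyckStep → ℤ
  | U => 1
  | D => -1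

theorem sum_map_toInt (l : List DyckStep) : (l.map toInt).sum = l.count U - l.count D := by
  induction l with
  | nil => simp
  | cons s l ih => cases s <;> simp [toInt, ih] <;> ring

theorem isConfinedWalkToZero_toInt_iff (l : List DyckStep) :
    IsConfinedWalkToZero toInt (0 ≤ ·) 0 l ↔
      (∀ i, (l.take i).count D ≤ (l.take i).count U) ∧ l.count U = l.count D := by
  simp only [IsConfinedWalkToZero, zero_add, sum_map_toInt, sub_nonneg, sub_eq_zero, Nat.cast_le,
    Nat.cast_inj]

end DyckStep

open DyckStep

def dyckWordEquiv (N : ℕ) :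
    {l : List DyckStep // l.length = N ∧ IsConfinedWalkToZero toInt (0 ≤ ·) 0 l} ≃
      {p : DyckWord // p.toList.length = N} where
  toFun l :=
    have h := (isConfinedWalkToZero_toInt_iff l.1).mp l.2.2
    ⟨⟨l.1, h.2, h.1⟩, l.2.1⟩
  invFun p := ⟨p.1.toList, p.2, (isConfinedWalkToZero_toInt_iff _).mpr
    ⟨p.1.count_D_le_count_U, p.1.count_U_eq_count_D⟩⟩

theorem walkCount_toInt (N : ℕ) :
    walkCount toInt (0 ≤ ·) N 0 = Nat.card {p : DyckWord // p.toList.length = N} := by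
  rw [walkCount, Nat.card_subtype_ofFn, Nat.card_congr (dyckWordEquiv N)]

theorem walkCount_toInt_two_mul (k : ℕ) : walkCount toInt (0 ≤ ·) (2 * k) 0 = catalan k := by
  rw [walkCount_toInt, ← DyckWord.card_dyckWord_semilength_eq_catalan, ← Nat.card_eq_fintype_card]
  exact Nat.card_congr (Equiv.subtypeEquivRight fun p => by
    rw [← p.two_mul_semilength_eq_length]; omega)

theorem walkCount_toInt_of_odd {N : ℕ} (hN : Odd N) : walkCount toInt (0 ≤ ·) N 0 = 0 := by
  rw [walkCount_toInt, Nat.card_eq_zero]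
  obtain ⟨k, rfl⟩ := hN
  refine Or.inl ⟨fun ⟨p, hp⟩ => ?_⟩
  rw [← p.two_mul_semilength_eq_length] at hp
  omega

theorem sum_antidiagonal_two_mul {M : Type*} [AddCommMonoid M] (f : ℕ → ℕ → M)
    (hf : ∀ i j, Odd i → f i j = 0) (n : ℕ) :
    ∑ ij ∈ antidiagonal (2 * n), f ij.1 ij.2 = ∑ ij ∈ antidiagonal n, f (2 * ij.1) (2 * ij.2) := by
  symm
  refine sum_of_injOn (fun ij => (2 * ij.1, 2 * ij.2)) ?_ ?_ ?_ ?_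
  · intro x _ y _ h
    simp only [Prod.mk.injEq] at h
    ext <;> omega
  · intro x hx
    simp only [mem_coe, HasAntidiagonal.mem_antidiagonal] at hx ⊢
    omega
  · intro ij hij hnot
    simp only [HasAntidiagonal.mem_antidiagonal] at hij
    refine hf _ _ (Nat.not_even_iff_odd.mp fun ⟨k, hk⟩ => hnot ⟨(k, n - k), ?_, ?_⟩)
    · simp only [mem_coe, HasAntidiagonal.mem_antidiagonal]
      omega
    · ext <;> dsimp only <;> omega
  · intro _ _
    rfl

theorem cast_catalan (m : ℕ) : (catalan m : ℚ) = (2 * m)! / (m ! * (m + 1)!) := by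
  have h : ((m + 1) * catalan m : ℚ) = (2 * m).choose m := by
    exact_mod_cast congrArg Nat.cast (succ_mul_catalan_eq_centralBinom m)
  rw [Nat.cast_choose ℚ (by omega : m ≤ 2 * m), show 2 * m - m = m by omega] at h
  rw [Nat.factorial_succ, Nat.cast_mul, Nat.cast_succ]
  field_simp at h ⊢
  linear_combination h

theorem choose_mul_catalan_mul_catalan (i j : ℕ) :
    ((2 * (i + j)).choose (2 * i) * (catalan i * catalan j) : ℚ) =
      (2 * (i + j))! / ((i + j)! * (i + j + 2)!) *
        ((i + j).choose i * (i + j + 2).choose (j + 1)) := by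
  rw [cast_catalan, cast_catalan, Nat.cast_choose ℚ (by omega : 2 * i ≤ 2 * (i + j)),
    Nat.cast_choose ℚ (by omega : i ≤ i + j), Nat.cast_choose ℚ (by omega : j + 1 ≤ i + j + 2),
    show 2 * (i + j) - 2 * i = 2 * j by omega, show i + j - i = j by omega,
    show i + j + 2 - (j + 1) = i + 1 by omega]
  field_simp

theorem sum_choose_mul_choose_succ (n : ℕ) :
    ∑ ij ∈ antidiagonal n, n.choose ij.1 * (n + 2).choose (ij.2 + 1) =
      (2 * n + 2).choose (n + 1) := by
  rw [show 2 * n + 2 = n + (n + 2) by ring, Nat.add_choose_eq, Nat.sum_antidiagonal_succ']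
  simp

theorem sum_choose_mul_catalan_mul_catalan (n : ℕ) :
    ∑ ij ∈ antidiagonal n, (2 * n).choose (2 * ij.1) * (catalan ij.1 * catalan ij.2) =
      catalan n * catalan (n + 1) := by
  have hterm : ∀ ij ∈ antidiagonal n,
      ((2 * n).choose (2 * ij.1) * (catalan ij.1 * catalan ij.2) : ℚ) =
        (2 * n)! / (n ! * (n + 2)!) * (n.choose ij.1 * (n + 2).choose (ij.2 + 1)) := by
    intro ij hij
    rw [← mem_antidiagonal.mp hij]
    exact choose_mul_catalan_mul_catalan ij.1 ij.2
  have hsum : ∑ ij ∈ antidiagonal n, (n.choose ij.1 * (n + 2).choose (ij.2 + 1) : ℚ) =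
      (2 * n + 2).choose (n + 1) := by
    exact_mod_cast sum_choose_mul_choose_succ n
  qify
  rw [sum_congr rfl hterm, ← mul_sum, hsum, cast_catalan, cast_catalan,
    Nat.cast_choose ℚ (by omega : n + 1 ≤ 2 * n + 2), show 2 * n + 2 - (n + 1) = n + 1 by omega,
    show 2 * (n + 1) = 2 * n + 2 by ring]
  field_simp

noncomputable def stepVecEquiv : Fin 4 ≃ DyckStep ⊕ DyckStep :=
  Equiv.ofBijective ![.inl U, .inl D, .inr U, .inr D] (by decide)

theorem stepVec_eq_comp :
    stepVec = Sum.elim (fun s => (toInt s, 0)) (fun t => (0, toInt t)) ∘ stepVecEquiv := by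
  funext i
  fin_cases i <;> rfl

theorem isQuarterWalk_and_walkSum_eq_zero_iff (l : List (Fin 4)) :
    IsQuarterWalk l ∧ walkSum l = (0, 0) ↔
      IsConfinedWalkToZero stepVec (fun p => 0 ≤ p.1 ∧ 0 ≤ p.2) 0 l := by
  simp only [IsQuarterWalk, walkSum, IsConfinedWalkToZero, zero_add]
  rfl

/-- The number of quarter-plane loops of length `2n` (walks with unit steps N, E, S, W
starting and ending at the origin, confined to `ℕ × ℕ`) equals `C_n · C_{n+1}`, the
product of consecutive Catalan numbers. -/
theorem stmt_19 (n : ℕ) :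
    Nat.card {f : Fin (2 * n) → Fin 4 //
        IsQuarterWalk (List.ofFn f) ∧ walkSum (List.ofFn f) = (0, 0)} =
      catalan n * catalan (n + 1) := by
  have hodd : ∀ i j, Odd i → (2 * n).choose i *
      (walkCount toInt (0 ≤ ·) i 0 * walkCount toInt (0 ≤ ·) j 0) = 0 := fun i j hi => by
    rw [walkCount_toInt_of_odd hi, zero_mul, mul_zero]
  calc _ = walkCount stepVec (fun p => 0 ≤ p.1 ∧ 0 ≤ p.2) (2 * n) 0 :=
        Nat.card_congr (Equiv.subtypeEquivRight fun f => isQuarterWalk_and_walkSum_eq_zero_iff _)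
    _ = walkCount (Sum.elim (fun s => (toInt s, 0)) (fun t => (0, toInt t)))
          (fun p => 0 ≤ p.1 ∧ 0 ≤ p.2) (2 * n) (0, 0) := by
        rw [stepVec_eq_comp, walkCount_comp_equiv]; rfl
    _ = ∑ ij ∈ antidiagonal (2 * n), (2 * n).choose ij.1 *
          (walkCount toInt (0 ≤ ·) ij.1 0 * walkCount toInt (0 ≤ ·) ij.2 0) :=
        walkCount_sumElim _ _ _ _ _ _ _
    _ = ∑ ij ∈ antidiagonal n, (2 * n).choose (2 * ij.1) * (catalan ij.1 * catalan ij.2) := by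
        simp only [sum_antidiagonal_two_mul _ hodd, walkCount_toInt_two_mul]
    _ = catalan n * catalan (n + 1) := sum_choose_mul_catalan_mul_catalan n
end
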